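/- arXiv:2208.07789 — 5 statements merged into one kernel-verified Lean document; each statement's English description precedes it below -/
import Mathlib

section
/- Factorization Forest theorem of Simon: for every finite monoid S, every finite alphabet A, and every morphism α : A* → S, every word w ∈ A* has an α-factorization forest of height at most 3|S|. -/
/-- Decomposition trees: leaves are labeled by a single letter (`some a`) or the
empty word (`none`); an inner node's label is the concatenation of its children's labels. -/
inductive DTree (A : Type) : Type
  | leaf : Option A → DTree A
  | node : List (DTree A) → DTree A

namespace DTree

/-- The word (label) of a tree. -/
def word {A : Type} : DTree A → List A
  | .leaf none => []
  | .leaf (some a) => [a]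
  | .node ts => wordList ts
where wordList {A : Type} : List (DTree A) → List A
  | [] => []
  | t :: ts => word t ++ wordList ts

/-- Height: number of edges on a longest root-to-leaf path. -/
def height {A : Type} : DTree A → ℕ
  | .leaf _ => 0
  | .node ts => heightList ts + 1
where heightList {A : Type} : List (DTree A) → ℕ
  | [] => 0
  | t :: ts => max (height t) (heightList ts)

/-- `t` is an α-factorization forest: every node of degree > 2 corresponds to an
idempotent rule. -/
def IsFF {A S : Type} [Monoid S] (α : List A → S) : DTree A → Prop
  | .leaf _ => True
  | .node ts =>
      (2 < ts.length → ∃ e : S, e * e = e ∧ ∀ t ∈ ts, α t.word = e) ∧ listFF α ts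
where listFF {A S : Type} [Monoid S] (α : List A → S) : List (DTree A) → Prop
  | [] => True
  | t :: ts => IsFF α t ∧ listFF α ts

/-- The tree contains a node of degree at least `ℓ`. -/
def hasBigNode {A : Type} (ℓ : ℕ) : DTree A → Prop
  | .leaf _ => False
  | .node ts => ℓ ≤ ts.length ∨ listBig ℓ ts
where listBig {A : Type} (ℓ : ℕ) : List (DTree A) → Prop
  | [] => False
  | t :: ts => hasBigNode ℓ t ∨ listBig ℓ ts

end DTree

/-!
Let `s = α w` and let `J` be its `J`-class. By induction on the number of elements `J`-above `s`,
every factor of `w` whose value lies strictly above `J` has a forest of some height `h`, with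
`h + 3 |J| = 3 |{x | s ≤_J x}|`. Cutting `w` greedily from the left gives pieces `z b` (`b` a
letter, `α z` strictly above `J`, `α (z b) ∈ J`) followed by a remainder strictly above `J`;
each piece has a forest of height `h + 1`.

The piece that starts after the prefix `P` of `w`, `Q` being the suffix from that piece on, is
labelled by `α Q * t`, where right multiplication by `t` carries the `L`-class of `s` to that of
`α P` (Green's lemma). All labels lie in `J`, and by stability of finite monoids two pieces with
the same label `ℓ` enclose a factor whose value is the idempotent of the `H`-class of `ℓ`.

Split the labelled pieces at the occurrences of the first label: the chunks between consecutive
occurrences all have that idempotent value and go under a single node, and each chunk is its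
first piece followed by a forest for the rest, built by induction on the number of labels. Every
label costs three levels, so `w` gets a forest of height `h + 3 |J|`.
-/

namespace DTree

variable {A S : Type}

theorem word_node (ts : List (DTree A)) : (node ts).word = (ts.map word).flatten := by
  change word.wordList ts = _
  induction ts with
  | nil => rfl
  | cons t ts ih => simp [word.wordList, ih]

theorem height_node_le {ts : List (DTree A)} {H : ℕ} (h : ∀ t ∈ ts, t.height ≤ H) :
    (node ts).height ≤ H + 1 := by
  change height.heightList ts + 1 ≤ H + 1
  induction ts with
  | nil => simp [height.heightList]
  | cons t ts ih =>
    simp only [List.mem_cons, forall_eq_or_imp] at h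
    simpa [height.heightList] using ⟨h.1, by simpa using ih h.2⟩

theorem isFF_node_iff [Monoid S] (α : List A → S) (ts : List (DTree A)) :
    (node ts).IsFF α ↔ (2 < ts.length → ∃ e : S, e * e = e ∧ ∀ t ∈ ts, α t.word = e) ∧
      ∀ t ∈ ts, t.IsFF α := by
  change _ ∧ IsFF.listFF α ts ↔ _
  suffices ∀ ts : List (DTree A), IsFF.listFF α ts ↔ ∀ t ∈ ts, t.IsFF α by rw [this]
  intro ts
  induction ts with
  | nil => simp [IsFF.listFF]
  | cons t ts ih => simp [IsFF.listFF, ih]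

end DTree

section Forest

variable {A S : Type} [Monoid S] (α : List A → S)

def HasForest (w : List A) (H : ℕ) : Prop :=
  ∃ t : DTree A, t.word = w ∧ t.IsFF α ∧ t.height ≤ H

variable {α}

theorem HasForest.mono {w : List A} {H H' : ℕ} (h : HasForest α w H) (hH : H ≤ H') :
    HasForest α w H' :=
  let ⟨t, hw, hff, ht⟩ := h
  ⟨t, hw, hff, ht.trans hH⟩

theorem hasForest_nil (H : ℕ) : HasForest α [] H :=
  ⟨.leaf none, rfl, trivial, Nat.zero_le _⟩

theorem hasForest_singleton (a : A) (H : ℕ) : HasForest α [a] H :=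
  ⟨.leaf (some a), rfl, trivial, Nat.zero_le _⟩

theorem exists_trees_of_forall_hasForest {us : List (List A)} {H : ℕ}
    (h : ∀ u ∈ us, HasForest α u H) :
    ∃ ts : List (DTree A), ts.map DTree.word = us ∧ ∀ t ∈ ts, t.IsFF α ∧ t.height ≤ H := by
  induction us with
  | nil => exact ⟨[], rfl, by simp⟩
  | cons u us ih =>
    simp only [List.mem_cons, forall_eq_or_imp] at h
    obtain ⟨t, rfl, ht⟩ := h.1
    obtain ⟨ts, rfl, hts⟩ := ih h.2
    exact ⟨t :: ts, rfl, by simpa using ⟨ht, hts⟩⟩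

theorem HasForest.append {u v : List A} {H : ℕ} (hu : HasForest α u H) (hv : HasForest α v H) :
    HasForest α (u ++ v) (H + 1) := by
  obtain ⟨t, rfl, ht, hth⟩ := hu
  obtain ⟨t', rfl, ht', hth'⟩ := hv
  refine ⟨.node [t, t'], by simp [DTree.word_node], ?_, DTree.height_node_le (by simp [*])⟩
  rw [DTree.isFF_node_iff]
  exact ⟨by simp, by simp [*]⟩

theorem hasForest_flatten {us : List (List A)} {H : ℕ} {e : S} (he : IsIdempotentElem e)
    (h : ∀ u ∈ us, HasForest α u H ∧ α u = e) : HasForest α us.flatten (H + 1) := by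
  obtain ⟨ts, rfl, hts⟩ := exists_trees_of_forall_hasForest fun u hu => (h u hu).1
  refine ⟨.node ts, DTree.word_node ts, ?_, DTree.height_node_le fun t ht => (hts t ht).2⟩
  rw [DTree.isFF_node_iff]
  exact ⟨fun _ => ⟨e, he, fun t ht => (h _ (List.mem_map_of_mem ht)).2⟩, fun t ht => (hts t ht).1⟩

end Forest

section Green

variable {S : Type} [Monoid S]

def LeR (x y : S) : Prop := ∃ u, x = y * u
def LeL (x y : S) : Prop := ∃ u, x = u * y
def LeJ (x y : S) : Prop := ∃ u v, x = u * y * v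

def REquiv (x y : S) : Prop := LeR x y ∧ LeR y x
def LEquiv (x y : S) : Prop := LeL x y ∧ LeL y x
def JEquiv (x y : S) : Prop := LeJ x y ∧ LeJ y x

theorem leR_mul_right (x u : S) : LeR (x * u) x := ⟨u, rfl⟩
theorem leL_mul_left (u x : S) : LeL (u * x) x := ⟨u, rfl⟩
theorem leJ_refl (x : S) : LeJ x x := ⟨1, 1, by simp⟩

theorem LeR.trans {x y z : S} : LeR x y → LeR y z → LeR x z := by
  rintro ⟨u, rfl⟩ ⟨v, rfl⟩; exact ⟨v * u, by simp [mul_assoc]⟩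
theorem LeL.trans {x y z : S} : LeL x y → LeL y z → LeL x z := by
  rintro ⟨u, rfl⟩ ⟨v, rfl⟩; exact ⟨u * v, by simp [mul_assoc]⟩
theorem LeJ.trans {x y z : S} : LeJ x y → LeJ y z → LeJ x z := by
  rintro ⟨u, v, rfl⟩ ⟨a, b, rfl⟩; exact ⟨u * a, b * v, by simp [mul_assoc]⟩
theorem LeR.leJ {x y : S} : LeR x y → LeJ x y := by
  rintro ⟨u, rfl⟩; exact ⟨1, u, by simp⟩
theorem LeL.leJ {x y : S} : LeL x y → LeJ x y := by
  rintro ⟨u, rfl⟩; exact ⟨u, 1, by simp⟩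

theorem REquiv.symm {x y : S} (h : REquiv x y) : REquiv y x := ⟨h.2, h.1⟩
theorem LEquiv.symm {x y : S} (h : LEquiv x y) : LEquiv y x := ⟨h.2, h.1⟩
theorem JEquiv.symm {x y : S} (h : JEquiv x y) : JEquiv y x := ⟨h.2, h.1⟩
theorem REquiv.trans {x y z : S} (h : REquiv x y) (h' : REquiv y z) : REquiv x z :=
  ⟨h.1.trans h'.1, h'.2.trans h.2⟩
theorem LEquiv.trans {x y z : S} (h : LEquiv x y) (h' : LEquiv y z) : LEquiv x z :=
  ⟨h.1.trans h'.1, h'.2.trans h.2⟩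
theorem JEquiv.trans {x y z : S} (h : JEquiv x y) (h' : JEquiv y z) : JEquiv x z :=
  ⟨h.1.trans h'.1, h'.2.trans h.2⟩
theorem LEquiv.jEquiv {x y : S} (h : LEquiv x y) : JEquiv x y := ⟨h.1.leJ, h.2.leJ⟩

theorem eq_of_isIdempotentElem_of_rEquiv_of_lEquiv {e f : S} (he : IsIdempotentElem e)
    (hf : IsIdempotentElem f) (hR : REquiv e f) (hL : LEquiv e f) : e = f := by
  obtain ⟨u, hu⟩ := hR.1
  obtain ⟨v, hv⟩ := hL.2
  calc e = f * e := by rw [hu, ← mul_assoc, hf.eq]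
    _ = f := by rw [hv, mul_assoc, he.eq]

variable [Finite S]

theorem exists_pow_add_eq_pow (c : S) : ∃ i d, 0 < d ∧ c ^ (i + d) = c ^ i := by
  obtain ⟨i, j, hne, hij⟩ := Finite.exists_ne_map_eq_of_infinite (fun n : ℕ => c ^ n)
  rcases Nat.lt_or_gt_of_ne hne with h | h
  · exact ⟨i, j - i, by omega, by rw [Nat.add_sub_cancel' h.le]; exact hij.symm⟩
  · exact ⟨j, i - j, by omega, by rw [Nat.add_sub_cancel' h.le]; exact hij⟩

theorem exists_pow_of_eq_mul_mul {a y c : S} (h : y = a * y * c) :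
    (∃ d, 0 < d ∧ a ^ d * y = y) ∧ ∃ d, 0 < d ∧ y * c ^ d = y := by
  have hpow : ∀ n, y = a ^ n * y * c ^ n := by
    intro n
    induction n with
    | zero => simp
    | succ n ih =>
      calc y = a * (a ^ n * y * c ^ n) * c := by rw [← ih]; exact h
        _ = a ^ (n + 1) * y * c ^ (n + 1) := by rw [pow_succ', pow_succ]; simp only [mul_assoc]
  obtain ⟨i, d, hd, hi⟩ := exists_pow_add_eq_pow a
  obtain ⟨i', d', hd', hi'⟩ := exists_pow_add_eq_pow c
  refine ⟨⟨d, hd, ?_⟩, d', hd', ?_⟩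
  · rw [hpow i, ← mul_assoc, ← mul_assoc, ← pow_add, add_comm, hi]
  · rw [hpow i', mul_assoc, ← pow_add, hi']

theorem LeR.stable {x y : S} (hxy : LeR x y) (hyx : LeJ y x) : LeR y x := by
  obtain ⟨u, rfl⟩ := hxy
  obtain ⟨a, b, hab⟩ := hyx
  obtain ⟨d, hd, hy⟩ := (exists_pow_of_eq_mul_mul (a := a) (y := y) (c := u * b)
    (by nth_rw 1 [hab]; simp [mul_assoc])).2
  refine ⟨b * (u * b) ^ (d - 1), ?_⟩
  conv_lhs => rw [← hy, ← Nat.succ_pred_eq_of_pos hd, pow_succ']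
  simp [mul_assoc]

theorem LeL.stable {x y : S} (hxy : LeL x y) (hyx : LeJ y x) : LeL y x := by
  obtain ⟨u, rfl⟩ := hxy
  obtain ⟨a, b, hab⟩ := hyx
  obtain ⟨d, hd, hy⟩ := (exists_pow_of_eq_mul_mul (a := a * u) (y := y) (c := b)
    (by nth_rw 1 [hab]; simp [mul_assoc])).1
  refine ⟨(a * u) ^ (d - 1) * a, ?_⟩
  conv_lhs => rw [← hy, ← Nat.succ_pred_eq_of_pos hd, pow_succ]
  simp [mul_assoc]

theorem exists_rEquiv_lEquiv {x y : S} (h : JEquiv x y) : ∃ z, REquiv z x ∧ LEquiv z y := by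
  obtain ⟨u, v, rfl⟩ := h.2
  have hxv : LeR (x * v) x := leR_mul_right x v
  have hy : LeL (u * x * v) (x * v) := ⟨u, mul_assoc _ _ _⟩
  refine ⟨x * v, ⟨hxv, hxv.stable (h.1.trans hy.leJ)⟩, hy.stable ?_, hy⟩
  exact hxv.leJ.trans h.1

end Green

section Labels

variable {S : Type} [Monoid S]

open Classical in
noncomputable def hIdempotent (x : S) : S :=
  if h : ∃ e, IsIdempotentElem e ∧ REquiv e x ∧ LEquiv e x then h.choose else 1

theorem isIdempotentElem_hIdempotent (x : S) : IsIdempotentElem (hIdempotent x) := by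
  unfold hIdempotent
  split_ifs with h
  · exact h.choose_spec.1
  · exact IsIdempotentElem.one

theorem hIdempotent_eq {x e : S} (he : IsIdempotentElem e) (hR : REquiv e x) (hL : LEquiv e x) :
    hIdempotent x = e := by
  have h : ∃ e, IsIdempotentElem e ∧ REquiv e x ∧ LEquiv e x := ⟨e, he, hR, hL⟩
  rw [hIdempotent, dif_pos h]
  obtain ⟨he', hR', hL'⟩ := h.choose_spec
  exact eq_of_isIdempotentElem_of_rEquiv_of_lEquiv he' he (hR'.trans hR.symm) (hL'.trans hL.symm)

noncomputable def lShift (s p : S) : S :=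
  Classical.epsilon fun t => REquiv (s * t) s ∧ LEquiv (s * t) p

theorem lShift_congr (s : S) {p p' : S} (h : LEquiv p p') : lShift s p = lShift s p' := by
  unfold lShift
  congr 1
  ext t
  exact and_congr_right fun _ => ⟨fun h' => h'.trans h, fun h' => h'.trans h.symm⟩

theorem lEquiv_mul_lShift [Finite S] {s p q : S} (hp : JEquiv p s) (hq : LEquiv q s) :
    LEquiv (q * lShift s p) p := by
  obtain ⟨z, hzs, hzp⟩ := exists_rEquiv_lEquiv hp.symm
  obtain ⟨t, rfl⟩ := hzs.1
  obtain ⟨hR, hL⟩ : REquiv (s * lShift s p) s ∧ LEquiv (s * lShift s p) p :=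
    Classical.epsilon_spec (p := fun t => REquiv (s * t) s ∧ LEquiv (s * t) p) ⟨t, hzs, hzp⟩
  obtain ⟨u, hu⟩ := hq.1
  obtain ⟨t', ht'⟩ := hR.2
  have hle : LeL (q * lShift s p) (s * lShift s p) := ⟨u, by rw [hu, mul_assoc]⟩
  have hq' : LeR q (q * lShift s p) :=
    ⟨t', by rw [hu]; simp only [mul_assoc] at ht' ⊢; rw [← ht']⟩
  exact ⟨hle.trans hL.1, hL.2.trans (hle.stable (hR.1.leJ.trans (hq.2.leJ.trans hq'.leJ)))⟩

theorem eq_hIdempotent_of_mul_lShift_eq [Finite S] {s p p' y b : S} (hp : JEquiv p s)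
    (hp' : JEquiv p' s) (hp'y : LeL p' y) (hy : JEquiv y s) (hb : LEquiv b s)
    (hyb : LEquiv (y * b) s) (heq : y * b * lShift s p = b * lShift s p') :
    y = hIdempotent (y * b * lShift s p) := by
  set l := y * b * lShift s p
  have hl : LEquiv l p := lEquiv_mul_lShift hp hyb
  have hl' : LEquiv l p' := heq ▸ lEquiv_mul_lShift hp' hb
  have hfix : y * l = l :=
    calc y * l = y * (b * lShift s p') := by rw [heq]
      _ = l := by rw [← lShift_congr s (hl.symm.trans hl'), ← mul_assoc]
  have hyl : JEquiv y l := hy.trans (hl.jEquiv.trans hp).symm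
  have hR : REquiv y l := ⟨LeR.stable ⟨l, hfix.symm⟩ hyl.1, ⟨l, hfix.symm⟩⟩
  have hyp' : LEquiv y p' := ⟨hp'y.stable (hy.1.trans hp'.2), hp'y⟩
  have hL : LEquiv y l := hyp'.trans hl'.symm
  have hidem : IsIdempotentElem y := by
    obtain ⟨z, hz⟩ := hR.1
    rw [IsIdempotentElem]
    nth_rw 2 [hz]
    rw [← mul_assoc, hfix, ← hz]
  exact (hIdempotent_eq hidem hR hL).symm

end Labels

section Ramsey

variable {A S Δ : Type} (α : List A → S) (ε : Δ → S)

def IsRamsey (xs : List (List A × Δ)) : Prop :=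
  ∀ pre x mid y post, xs = pre ++ x :: (mid ++ y :: post) → x.2 = y.2 →
    α (x.1 ++ mid.flatMap Prod.fst) = ε x.2

variable {α ε}

theorem IsRamsey.infix {xs ys zs : List (List A × Δ)} (h : IsRamsey α ε (xs ++ ys ++ zs)) :
    IsRamsey α ε ys := fun pre x mid y post hys hxy =>
  h (xs ++ pre) x mid y (post ++ zs) (by simp [hys]) hxy

variable [Monoid S]

theorem IsRamsey.exists_chunks {δ : Δ} {Q : List A × Δ → Prop} {Hc Hl : ℕ} {r : List A}
    (hc : ∀ z body, (∀ x ∈ body, x.2 ≠ δ) → IsRamsey α ε (z :: body) →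
      (∀ x ∈ z :: body, Q x) → HasForest α (z.1 ++ body.flatMap Prod.fst) Hc)
    (hl : ∀ z body, (∀ x ∈ body, x.2 ≠ δ) → IsRamsey α ε (z :: body) →
      (∀ x ∈ z :: body, Q x) → HasForest α (z.1 ++ body.flatMap Prod.fst ++ r) Hl) :
    ∀ (ys : List (List A × Δ)) (z : List A × Δ) (body : List (List A × Δ)), z.2 = δ →
      (∀ x ∈ body, x.2 ≠ δ) → IsRamsey α ε (z :: (body ++ ys)) →
      (∀ x ∈ z :: (body ++ ys), Q x) →
      ∃ (us : List (List A)) (c : List A),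
        z.1 ++ (body ++ ys).flatMap Prod.fst ++ r = us.flatten ++ c ∧
        (∀ u ∈ us, HasForest α u Hc ∧ α u = ε δ) ∧ HasForest α c Hl := by
  intro ys
  induction ys with
  | nil =>
    intro z body hz hbody hR hQ
    simp only [List.append_nil] at hR hQ ⊢
    exact ⟨[], _, rfl, by simp, hl z body hbody hR hQ⟩
  | cons x ys ih =>
    intro z body hz hbody hR hQ
    by_cases hx : x.2 = δ
    · obtain ⟨us, c, hw, hus, hc'⟩ := ih x [] hx (by simp)
        (IsRamsey.infix (xs := z :: body) (zs := []) (by simpa using hR))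
        (fun y hy => hQ y (List.mem_cons_of_mem _ (List.mem_append_right _ hy)))
      refine ⟨(z.1 ++ body.flatMap Prod.fst) :: us, c, by simp [← hw], ?_, hc'⟩
      have hval : α (z.1 ++ body.flatMap Prod.fst) = ε z.2 :=
        hR [] z body x ys (by simp) (hz.trans hx.symm)
      simp only [List.mem_cons, forall_eq_or_imp]
      refine ⟨⟨hc z body hbody ?_ fun y hy => hQ y ?_, hz ▸ hval⟩, hus⟩
      · exact IsRamsey.infix (xs := []) (zs := x :: ys) (by simpa using hR)
      · exact List.cons_subset_cons z (List.subset_append_left body _) hy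
    · have hbody' : ∀ y ∈ body ++ [x], y.2 ≠ δ := by
        intro y hy
        rcases List.mem_append.1 hy with hy | hy
        · exact hbody y hy
        · rwa [List.mem_singleton.1 hy]
      obtain ⟨us, c, hw, hus, hc'⟩ := ih z (body ++ [x]) hz hbody' (by simpa using hR)
        (by simpa using hQ)
      exact ⟨us, c, by simpa using hw, hus, hc'⟩

theorem IsRamsey.hasForest_chunk [DecidableEq Δ] {δ : Δ} {L : Finset Δ} {h : ℕ} (hδ : δ ∈ L)
    (ih : ∀ (xs : List (List A × Δ)) (r : List A), xs ≠ [] →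
      (∀ x ∈ xs, x.2 ∈ L.erase δ ∧ HasForest α x.1 h) → IsRamsey α ε xs → HasForest α r h →
      HasForest α (xs.flatMap Prod.fst ++ r) (h + 3 * (L.erase δ).card - 1))
    {z : List A × Δ} {body : List (List A × Δ)} (hbody : ∀ x ∈ body, x.2 ≠ δ)
    (hR : IsRamsey α ε (z :: body)) (hL : ∀ x ∈ z :: body, x.2 ∈ L ∧ HasForest α x.1 h) :
    HasForest α (z.1 ++ body.flatMap Prod.fst) (h + 3 * L.card - 3) ∧
      ∀ r, HasForest α r h →
        HasForest α (z.1 ++ body.flatMap Prod.fst ++ r) (h + 3 * L.card - 2) := by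
  have hK : 1 ≤ L.card := Finset.card_pos.2 ⟨_, hδ⟩
  have hz := (hL z (by simp)).2
  rcases eq_or_ne body [] with rfl | hb
  · exact ⟨by simpa using hz.mono (by omega),
      fun r hr => by simpa using (hz.append hr).mono (by omega)⟩
  have hL' : ∀ x ∈ body, x.2 ∈ L.erase δ ∧ HasForest α x.1 h := fun x hx =>
    ⟨Finset.mem_erase.2 ⟨hbody x hx, (hL x (by simp [hx])).1⟩, (hL x (by simp [hx])).2⟩
  obtain ⟨x, hx⟩ := List.exists_mem_of_ne_nil body hb
  have hK' : 1 ≤ (L.erase δ).card := Finset.card_pos.2 ⟨_, (hL' x hx).1⟩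
  rw [Finset.card_erase_of_mem hδ] at hK' ih
  have hR' := IsRamsey.infix (xs := [z]) (zs := []) (by simpa using hR)
  have hchunk : ∀ r, HasForest α r h →
      HasForest α (z.1 ++ (body.flatMap Prod.fst ++ r)) (h + 3 * L.card - 3) := fun r hr =>
    ((hz.mono (by omega)).append (ih body r hb hL' hR' hr)).mono (by omega)
  exact ⟨by simpa using hchunk [] (hasForest_nil _),
    fun r hr => by simpa using (hchunk r hr).mono (by omega)⟩

theorem IsRamsey.hasForest (hε : ∀ d, IsIdempotentElem (ε d)) {h : ℕ} (L : Finset Δ) :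
    ∀ (xs : List (List A × Δ)) (r : List A), xs ≠ [] →
      (∀ x ∈ xs, x.2 ∈ L ∧ HasForest α x.1 h) → IsRamsey α ε xs → HasForest α r h →
      HasForest α (xs.flatMap Prod.fst ++ r) (h + 3 * L.card - 1) := by
  classical
  induction L using Finset.strongInduction with
  | H L ih =>
  rintro (_ | ⟨z, ys⟩) r hne hxs hR hr
  · exact absurd rfl hne
  have hδ : z.2 ∈ L := (hxs z (by simp)).1
  have hK : 1 ≤ L.card := Finset.card_pos.2 ⟨_, hδ⟩
  have hchunk := fun (z' : List A × Δ) body =>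
    IsRamsey.hasForest_chunk hδ (ih _ (Finset.erase_ssubset hδ)) (z := z') (body := body)
  obtain ⟨us, c, hw, hus, hc⟩ := IsRamsey.exists_chunks
    (fun z' body hbody hR hL => (hchunk z' body hbody hR hL).1)
    (fun z' body hbody hR hL => (hchunk z' body hbody hR hL).2 r hr)
    ys z [] rfl (by simp) (by simpa using hR) (by simpa using hxs)
  have := (hasForest_flatten (hε z.2) hus).append (hc.mono (by omega))
  rw [← hw] at this
  simpa using this.mono (by omega)

end Ramsey

section Lists

variable {A Δ : Type}

theorem exists_greedy_factorization (p : List A → Prop) (w : List A) :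
    ∃ (vs : List (List A)) (r : List A), w = vs.flatten ++ r ∧
      (∀ v ∈ vs, p v ∧ ∃ z b, v = z ++ [b] ∧ (z = [] ∨ ¬ p z)) ∧ (r = [] ∨ ¬ p r) := by
  induction w using List.reverseRecOn with
  | nil => exact ⟨[], [], rfl, by simp, Or.inl rfl⟩
  | append_singleton w b ih =>
    obtain ⟨vs, r, rfl, hvs, hr⟩ := ih
    by_cases hp : p (r ++ [b])
    · refine ⟨vs ++ [r ++ [b]], [], by simp, ?_, Or.inl rfl⟩
      simp only [List.mem_append, List.mem_singleton]
      rintro v (hv | rfl)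
      exacts [hvs v hv, ⟨hp, r, b, rfl, hr⟩]
    · exact ⟨vs, r ++ [b], by simp, hvs, Or.inr hp⟩

theorem exists_prefix_labelling (f : List A → Δ) (vs : List (List A)) :
    ∃ xs : List (List A × Δ), xs.map Prod.fst = vs ∧
      ∀ pre x post, xs = pre ++ x :: post → x.2 = f (pre.flatMap Prod.fst) := by
  induction vs generalizing f with
  | nil => exact ⟨[], rfl, by simp⟩
  | cons v vs ih =>
    obtain ⟨xs, hxs, hlab⟩ := ih fun p => f (v ++ p)
    refine ⟨(v, f []) :: xs, by simp [hxs], ?_⟩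
    rintro (_ | ⟨y, pre⟩) x post h
    · obtain ⟨rfl, -⟩ := List.cons.inj h
      rfl
    · simp only [List.cons_append, List.cons.injEq] at h
      obtain ⟨rfl, h⟩ := h
      simp [hlab pre x post h]

end Lists

section Cuts

variable {A S : Type} [Monoid S] {α : List A → S}

theorem leJ_of_infix (hα : ∀ u v, α (u ++ v) = α u * α v) {u w : List A} (h : u <:+: w) :
    LeJ (α w) (α u) := by
  obtain ⟨a, b, rfl⟩ := h
  exact ⟨α a, α b, by rw [hα, hα]⟩

theorem leJ_append (hα : ∀ u v, α (u ++ v) = α u * α v) {u v : List A} {s : S}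
    (hu : LeJ (α u) s) : LeJ (α (u ++ v)) s := by
  rw [hα]
  exact (leR_mul_right _ _).leJ.trans hu

theorem lEquiv_of_suffix [Finite S] (hα : ∀ u v, α (u ++ v) = α u * α v) {P Q : List A}
    (hQ : LeJ (α Q) (α (P ++ Q))) : LEquiv (α Q) (α (P ++ Q)) := by
  have hs : LeL (α (P ++ Q)) (α Q) := ⟨α P, hα _ _⟩
  exact ⟨hs.stable hQ, hs⟩

/-- The empty prefix counts as having value `α w` rather than `α []`, which keeps every label in
the `J`-class of `α w`. -/
noncomputable def cutLabel (α : List A → S) (w P : List A) : S :=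
  α (w.drop P.length) * lShift (α w) (if P = [] then α w else α P)

theorem jEquiv_prefix_value (hα : ∀ u v, α (u ++ v) = α u * α v) {P Q : List A}
    (hP : P = [] ∨ LeJ (α P) (α (P ++ Q))) :
    JEquiv (if P = [] then α (P ++ Q) else α P) (α (P ++ Q)) := by
  split_ifs with h
  · exact ⟨leJ_refl _, leJ_refl _⟩
  · exact ⟨hP.resolve_left h, leJ_of_infix hα (List.prefix_append P Q).isInfix⟩

theorem jEquiv_cutLabel [Finite S] (hα : ∀ u v, α (u ++ v) = α u * α v) {P Q : List A}
    (hP : P = [] ∨ LeJ (α P) (α (P ++ Q))) (hQ : LeJ (α Q) (α (P ++ Q))) :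
    JEquiv (cutLabel α (P ++ Q) P) (α (P ++ Q)) := by
  have hp := jEquiv_prefix_value hα hP
  rw [cutLabel, List.drop_left]
  exact (lEquiv_mul_lShift hp (lEquiv_of_suffix hα hQ)).jEquiv.trans hp

theorem eq_hIdempotent_of_cutLabel_eq [Finite S] (hα : ∀ u v, α (u ++ v) = α u * α v)
    {P Y B : List A} (hP : P = [] ∨ LeJ (α P) (α (P ++ Y ++ B))) (hY : Y ≠ [])
    (hYJ : LeJ (α Y) (α (P ++ Y ++ B))) (hB : LeJ (α B) (α (P ++ Y ++ B)))
    (heq : cutLabel α (P ++ Y ++ B) P = cutLabel α (P ++ Y ++ B) (P ++ Y)) :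
    α Y = hIdempotent (cutLabel α (P ++ Y ++ B) P) := by
  have hw : P ++ Y ++ B = P ++ (Y ++ B) := List.append_assoc P Y B
  have hl : cutLabel α (P ++ Y ++ B) P = α Y * α B *
      lShift (α (P ++ Y ++ B)) (if P = [] then α (P ++ Y ++ B) else α P) := by
    rw [cutLabel, hw, List.drop_left, hα]
  have hl' : cutLabel α (P ++ Y ++ B) (P ++ Y) =
      α B * lShift (α (P ++ Y ++ B)) (α (P ++ Y)) := by
    rw [cutLabel, List.drop_left, if_neg (by simp [hY])]
  have hyb : LEquiv (α Y * α B) (α (P ++ Y ++ B)) := by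
    rw [← hα, hw]
    exact lEquiv_of_suffix hα (hw ▸ leJ_append hα hYJ)
  have hp : JEquiv (if P = [] then α (P ++ Y ++ B) else α P) (α (P ++ Y ++ B)) := by
    rw [hw]
    exact jEquiv_prefix_value hα (hw ▸ hP)
  rw [hl] at heq ⊢
  rw [hl'] at heq
  refine eq_hIdempotent_of_mul_lShift_eq hp ?_
    ⟨α P, hα _ _⟩ ⟨hYJ, leJ_of_infix hα ?_⟩ (lEquiv_of_suffix hα hB) hyb heq
  · exact ⟨hα P Y ▸ (leL_mul_left _ _).leJ.trans hYJ,
      leJ_of_infix hα (List.prefix_append _ _).isInfix⟩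
  · exact (List.infix_append P Y B)

theorem isRamsey_of_cutLabels [Finite S] (hα : ∀ u v, α (u ++ v) = α u * α v)
    {w r : List A} {xs : List (List A × S)} (hw : w = xs.flatMap Prod.fst ++ r)
    (hxs : ∀ x ∈ xs, x.1 ≠ [] ∧ LeJ (α x.1) (α w))
    (hlab : ∀ pre x post, xs = pre ++ x :: post → x.2 = cutLabel α w (pre.flatMap Prod.fst)) :
    IsRamsey α hIdempotent xs ∧ ∀ x ∈ xs, JEquiv x.2 (α w) := by
  have hpre : ∀ pre x post, xs = pre ++ x :: post →
      pre.flatMap Prod.fst = [] ∨ LeJ (α (pre.flatMap Prod.fst)) (α w) := by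
    rintro (_ | ⟨x₀, pre⟩) x post hsplit
    · exact Or.inl rfl
    · exact Or.inr (leJ_append hα (hxs x₀ (by simp [hsplit])).2)
  refine ⟨fun pre x mid y post hsplit hxy => ?_, fun x hx => ?_⟩
  · have hsplit' : xs = (pre ++ x :: mid) ++ y :: post := by simp [hsplit]
    have hw' : w = pre.flatMap Prod.fst ++ (x.1 ++ mid.flatMap Prod.fst) ++
        (y.1 ++ (post.flatMap Prod.fst ++ r)) := by
      simp [hw, hsplit]
    have hx := hlab pre x _ hsplit
    have hy := hlab _ y post hsplit'
    have hP := hpre pre x _ hsplit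
    have hx' := hxs x (by simp [hsplit])
    have hy' := hxs y (by simp [hsplit])
    simp only [List.flatMap_append, List.flatMap_cons] at hy
    rw [hx, hw'] at hxy ⊢
    rw [hy, hw'] at hxy
    rw [hw'] at hP hx' hy'
    exact eq_hIdempotent_of_cutLabel_eq hα hP (by simp [hx'.1]) (leJ_append hα hx'.2)
      (leJ_append hα hy'.2) hxy
  · obtain ⟨pre, post, hsplit⟩ := List.append_of_mem hx
    have hw' : w = pre.flatMap Prod.fst ++ (x.1 ++ (post.flatMap Prod.fst ++ r)) := by
      simp [hw, hsplit]
    have hP := hpre pre x post hsplit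
    have hx' := hxs x hx
    rw [hlab pre x post hsplit, hw']
    rw [hw'] at hP hx'
    exact jEquiv_cutLabel hα hP (leJ_append hα hx'.2)

end Cuts

theorem hasForest_of_forall_infix_above {A S : Type} [Monoid S] [Finite S] {α : List A → S}
    (hα : ∀ u v, α (u ++ v) = α u * α v) (w : List A) {h : ℕ}
    (habove : ∀ u, u <:+: w → ¬ LeJ (α u) (α w) → HasForest α u h) :
    HasForest α w (h + 3 * {x | JEquiv x (α w)}.ncard) := by
  obtain ⟨vs, r, hw, hvs, hr⟩ := exists_greedy_factorization (fun u => LeJ (α u) (α w)) w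
  have hforest : ∀ u, u <:+: w → (u = [] ∨ ¬ LeJ (α u) (α w)) → HasForest α u h := by
    rintro u hu (rfl | hu')
    exacts [hasForest_nil _, habove u hu hu']
  rcases eq_or_ne vs [] with rfl | hne
  · rw [List.flatten_nil, List.nil_append] at hw
    subst hw
    exact (hforest w List.infix_rfl hr).mono (Nat.le_add_right _ _)
  obtain ⟨xs, hxs, hlab⟩ := exists_prefix_labelling (cutLabel α w) vs
  have hwxs : w = xs.flatMap Prod.fst ++ r := by rw [List.flatMap_def, hxs, hw]
  have hpiece : ∀ x ∈ xs, (x.1 ≠ [] ∧ LeJ (α x.1) (α w)) ∧ HasForest α x.1 (h + 1) := by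
    intro x hx
    have hv : x.1 ∈ vs := hxs ▸ List.mem_map_of_mem hx
    obtain ⟨hJ, z, b, hzb, hz⟩ := hvs _ hv
    refine ⟨⟨by simp [hzb], hJ⟩, hzb ▸ (hforest z ?_ hz).append (hasForest_singleton b h)⟩
    rw [hw]
    exact ((List.prefix_append z [b]).isInfix.trans (hzb ▸ List.infix_of_mem_flatten hv)).trans
      (List.prefix_append _ _).isInfix
  obtain ⟨hRamsey, hJ⟩ := isRamsey_of_cutLabels hα hwxs (fun x hx => (hpiece x hx).1) hlab
  have hL := Set.toFinite {x | JEquiv x (α w)}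
  have key := IsRamsey.hasForest isIdempotentElem_hIdempotent (h := h + 1) hL.toFinset xs r
    (by rintro rfl; exact hne (by simp [← hxs]))
    (fun x hx => ⟨by simpa using hJ x hx, (hpiece x hx).2⟩)
    hRamsey ((hforest r (hw ▸ (List.suffix_append _ _).isInfix) hr).mono (Nat.le_succ h))
  rw [← hwxs, ← Set.ncard_eq_toFinset_card _ hL] at key
  exact key.mono (by omega)

theorem hasForest_three_mul_ncard {A S : Type} [Monoid S] [Finite S] {α : List A → S}
    (hα : ∀ u v, α (u ++ v) = α u * α v) (w : List A) :
    HasForest α w (3 * {x | LeJ (α w) x}.ncard) := by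
  induction hn : {x | LeJ (α w) x}.ncard using Nat.strong_induction_on generalizing w with
  | _ n ih =>
  set U := {x | LeJ (α w) x}
  set J := {x | JEquiv x (α w)} with hJdef
  have hJU : J ⊆ U := fun x hx => hx.2
  have hJ : 0 < J.ncard := (Set.ncard_pos).2 ⟨α w, leJ_refl _, leJ_refl _⟩
  have hJn : J.ncard ≤ n := hn ▸ Set.ncard_le_ncard hJU
  refine (hasForest_of_forall_infix_above hα w (h := 3 * (n - J.ncard)) fun u hu hnot => ?_).mono
    (by rw [← hJdef]; omega)
  have hsub : {x | LeJ (α u) x} ⊆ U \ J := fun x hx =>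
    ⟨(leJ_of_infix hα hu).trans hx, fun hxJ => hnot (LeJ.trans hx hxJ.1)⟩
  have hle : {x | LeJ (α u) x}.ncard ≤ n - J.ncard :=
    hn ▸ Set.ncard_sdiff hJU ▸ Set.ncard_le_ncard hsub
  exact (ih _ (by omega) u rfl).mono (by omega)

theorem simon_factorization_forest_general
    {S A : Type} [Monoid S] [Fintype S]
    (α : List A → S)
    (hα_mul : ∀ u v : List A, α (u ++ v) = α u * α v)
    (w : List A) :
    ∃ t : DTree A, t.word = w ∧ DTree.IsFF α t ∧ t.height ≤ 3 * Fintype.card S :=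
  (hasForest_three_mul_ncard hα_mul w).mono
    (by simpa [Nat.card_eq_fintype_card] using Set.ncard_le_card {x | LeJ (α w) x})

/-- Factorization Forest theorem of Simon. -/
theorem simon_factorization_forest
    {S A : Type} [Monoid S] [Fintype S] [Fintype A]
    (α : List A → S) (hα_one : α [] = 1)
    (hα_mul : ∀ u v : List A, α (u ++ v) = α u * α v)
    (w : List A) :
    ∃ t : DTree A, t.word = w ∧ DTree.IsFF α t ∧ t.height ≤ 3 * Fintype.card S :=
  simon_factorization_forest_general α hα_mul w
end

section
/- Let T be a tournament and σ an ordering of T such that for every pair of vertices u, v, if σ(u) < σ(v) then the outdegree of u in T is not smaller than the outdegree of v. Then the width of σ is equal to ctw(T). -/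
namespace TournamentPaper

open Classical

/-- A finite simple directed graph. -/
structure Digr (V : Type) where
  Adj : V → V → Prop
  loopless : ∀ v, ¬ Adj v v

namespace Digr

variable {V : Type}

/-- A tournament: exactly one of the two arcs between any two distinct vertices. -/
def IsTournament (T : Digr V) : Prop :=
  ∀ u v : V, u ≠ v → (T.Adj u v ↔ ¬ T.Adj v u)

/-- The arc set, as a set of ordered pairs. -/
def arcs (T : Digr V) : Set (V × V) := {e | T.Adj e.1 e.2}

/-- The subdigraph induced by a set of vertices. -/
def induce (T : Digr V) (X : Set V) : Digr V where
  Adj u v := u ∈ X ∧ v ∈ X ∧ T.Adj u v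
  loopless v h := T.loopless v h.2.2

/-- Deletion of a set of arcs. -/
def deleteArcs (T : Digr V) (F : Set (V × V)) : Digr V where
  Adj u v := T.Adj u v ∧ (u, v) ∉ F
  loopless v h := T.loopless v h.1

/-- Outdegree of a vertex. -/
noncomputable def outdeg (T : Digr V) (u : V) : ℕ := {v | T.Adj u v}.ncard

end Digr

variable {V : Type}

/-- An ordering of the vertex set: a bijection onto `{1, …, |V|}`. -/
def IsOrdering [Fintype V] (σ : V → ℕ) : Prop :=
  Set.BijOn σ Set.univ (Set.Icc 1 (Fintype.card V))

/-- The `γ`-cut of an ordering: arcs `(u,v)` with `σ u > γ ≥ σ v`. -/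
def cutAt (T : Digr V) (σ : V → ℕ) (γ : ℕ) : Set (V × V) :=
  {e | T.Adj e.1 e.2 ∧ γ < σ e.1 ∧ σ e.2 ≤ γ}

/-- The width of an ordering: the maximal size of a cut. -/
noncomputable def width [Fintype V] (T : Digr V) (σ : V → ℕ) : ℕ :=
  (Finset.range (Fintype.card V + 1)).sup fun γ => (cutAt T σ γ).ncard

/-- The cutwidth: the minimum width over all orderings. -/
noncomputable def ctw [Fintype V] (T : Digr V) : ℕ :=
  sInf {w | ∃ σ : V → ℕ, IsOrdering σ ∧ width T σ = w}

/-- The σ-interval `σ(a, b]`. -/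
def interval (σ : V → ℕ) (a b : ℕ) : Set V := {v | a < σ v ∧ σ v ≤ b}

/-- Arcs of `T` from `X` to `Y`. -/
def arcsBetween (T : Digr V) (X Y : Set V) : Set (V × V) :=
  {e | T.Adj e.1 e.2 ∧ e.1 ∈ X ∧ e.2 ∈ Y}

/-- `∂⁺(I)` for `I = σ(a,b]`: arcs from `I` to `σ(0,a]`. -/
def dPlus [Fintype V] (T : Digr V) (σ : V → ℕ) (a b : ℕ) : Set (V × V) :=
  arcsBetween T (interval σ a b) (interval σ 0 a)

/-- `∂⁻(I)`: arcs from `σ(b,|V|]` to `I`. -/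
def dMinus [Fintype V] (T : Digr V) (σ : V → ℕ) (a b : ℕ) : Set (V × V) :=
  arcsBetween T (interval σ b (Fintype.card V)) (interval σ a b)

/-- `Γ⁺(I)`: arcs from `I` to `σ(b,|V|]`. -/
def gPlus [Fintype V] (T : Digr V) (σ : V → ℕ) (a b : ℕ) : Set (V × V) :=
  arcsBetween T (interval σ a b) (interval σ b (Fintype.card V))

/-- `Γ⁻(I)`: arcs from `σ(0,a]` to `I`. -/
def gMinus [Fintype V] (T : Digr V) (σ : V → ℕ) (a b : ℕ) : Set (V × V) :=
  arcsBetween T (interval σ 0 a) (interval σ a b)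

/-- The interval `σ(a,b]` is `c`-flat: `|∂⁺| ≤ c`, `|∂⁻| ≤ c`, and the restriction
of `σ` to the induced subtournament has width at most `c`. -/
def Flat [Fintype V] (T : Digr V) (σ : V → ℕ) (a b c : ℕ) : Prop :=
  (dPlus T σ a b).ncard ≤ c ∧ (dMinus T σ a b).ncard ≤ c ∧
  ∀ γ : ℕ, (cutAt (T.induce (interval σ a b)) σ γ).ncard ≤ c

/-- The list of arcs of a list of vertices (viewed as a walk). -/
def listArcs (l : List V) : List (V × V) := l.zip l.tail

/-- An immersion model of `H` in `G`: an injective vertex map together with, for each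
arc of `H`, a directed simple path in `G` between the images of its endpoints, the
paths being pairwise arc-disjoint. -/
structure ImmersionModel {VH V : Type} (H : Digr VH) (G : Digr V) where
  vmap : VH → V
  inj : Function.Injective vmap
  path : ∀ e : VH × VH, H.Adj e.1 e.2 → List V
  chain : ∀ e he, (path e he).Chain' G.Adj
  nodup : ∀ e he, (path e he).Nodup
  head : ∀ e he, (path e he).head? = some (vmap e.1)
  last : ∀ e he, (path e he).getLast? = some (vmap e.2)
  arc_disj : ∀ e he e' he', e ≠ e' → ∀ x ∈ listArcs (path e he), x ∉ listArcs (path e' he')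

/-- The set of arcs of `G` used by an immersion model. -/
def ImmersionModel.arcsUsed {VH V : Type} {H : Digr VH} {G : Digr V}
    (M : ImmersionModel H G) : Set (V × V) :=
  {x | ∃ e he, x ∈ listArcs (M.path e he)}

/-- `G` contains `H` as an immersion. -/
def HasImm {VH V : Type} (H : Digr VH) (G : Digr V) : Prop :=
  Nonempty (ImmersionModel H G)

/-- A family of pairwise arc-disjoint immersion models. -/
def ArcDisjointModels {VH V : Type} {H : Digr VH} {G : Digr V} {k : ℕ}
    (M : Fin k → ImmersionModel H G) : Prop :=
  ∀ i j, i ≠ j → Disjoint (M i).arcsUsed (M j).arcsUsed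


/-! If `S` is a set of `γ` vertices of an `n`-vertex tournament, each pair inside `S` and each
pair in `S × Sᶜ` carries exactly one arc, so
`2 (|arcs Sᶜ → S| + Σ_{v ∈ S} d⁺(v)) = 2γ(n - γ) + γ(γ - 1)`. The `γ`-cut of an ordering thus
decreases as the outdegree sum of its `γ`-prefix increases, and an ordering sorted by
non-increasing outdegree maximises that sum for every `γ`. -/

open Finset

theorem sum_le_sum_of_card_eq_of_forall_le {α M : Type*} [AddCommMonoid M] [LinearOrder M]
    [IsOrderedAddMonoid M] {f : α → M} {s t : Finset α} (hcard : #s = #t)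
    (hle : ∀ a ∈ s \ t, ∀ b ∈ t \ s, f a ≤ f b) :
    ∑ a ∈ s, f a ≤ ∑ a ∈ t, f a := by
  classical
  rw [← sum_inter_add_sum_sdiff s t f, ← sum_inter_add_sum_sdiff t s f, inter_comm]
  gcongr ∑ x ∈ t ∩ s, f x + ?_
  obtain he | ⟨b₀, hb₀, hmin⟩ := (t \ s).eq_empty_or_nonempty.imp_right
    (exists_min_image (t \ s) f)
  · have : s \ t = ∅ := card_eq_zero.mp (by rw [card_sdiff_comm hcard, he, card_empty])
    simp [this, he]
  · calc ∑ a ∈ s \ t, f a ≤ #(s \ t) • f b₀ := sum_le_card_nsmul _ _ _ fun a ha => hle a ha b₀ hb₀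
      _ = #(t \ s) • f b₀ := by rw [card_sdiff_comm hcard]
      _ ≤ ∑ b ∈ t \ s, f b := card_nsmul_le_sum _ _ _ hmin

namespace Digr

theorem outdeg_eq_card_filter [Fintype V] (T : Digr V) (u : V) :
    T.outdeg u = #(univ.filter (T.Adj u)) := by
  rw [outdeg, Set.ncard_eq_toFinset_card']
  simp

theorem sum_outdeg_eq_ncard_arcsBetween_univ [Fintype V] (T : Digr V) (S : Finset V) :
    ∑ v ∈ S, T.outdeg v = (arcsBetween T S Set.univ).ncard := by
  have hS : arcsBetween T S Set.univ = ↑((S ×ˢ univ).filter fun e => T.Adj e.1 e.2) := by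
    ext e
    simp [arcsBetween, and_comm]
  rw [hS, Set.ncard_coe_finset, card_filter, sum_product]
  simp only [outdeg_eq_card_filter, card_filter]

theorem ncard_arcsBetween_univ [Finite V] (T : Digr V) (X : Set V) :
    (arcsBetween T X Set.univ).ncard
      = (arcsBetween T X X).ncard + (arcsBetween T X Xᶜ).ncard := by
  rw [← Set.ncard_union_eq]
  · congr 1
    ext e
    by_cases h : e.2 ∈ X <;> simp [arcsBetween, h]
  · rw [Set.disjoint_left]
    rintro e ⟨-, -, h⟩ ⟨-, -, h'⟩
    exact h' h

theorem IsTournament.ncard_arcsBetween_add_ncard_arcsBetween [Finite V] {T : Digr V}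
    (hT : T.IsTournament) (X Y : Set V) :
    (arcsBetween T X Y).ncard + (arcsBetween T Y X).ncard
      = {e : V × V | e.1 ∈ X ∧ e.2 ∈ Y ∧ e.1 ≠ e.2}.ncard := by
  have hswap : Prod.swap '' arcsBetween T Y X = {e | T.Adj e.2 e.1 ∧ e.1 ∈ X ∧ e.2 ∈ Y} := by
    ext e
    simp [Set.image_swap_eq_preimage_swap, arcsBetween, and_comm]
  rw [← Set.ncard_image_of_injective (arcsBetween T Y X) Prod.swap_injective, hswap,
    ← Set.ncard_union_eq]
  · congr 1
    ext ⟨u, v⟩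
    by_cases huv : u = v
    · subst huv
      simp [arcsBetween, T.loopless]
    · have := hT u v huv
      simp only [arcsBetween, Set.mem_union, Set.mem_ofPred_eq]
      tauto
  · rw [Set.disjoint_left]
    rintro ⟨u, v⟩ ⟨huv, -⟩ ⟨hvu, -⟩
    exact (hT u v (fun h => T.loopless u (h ▸ huv))).mp huv hvu

theorem IsTournament.ncard_arcsBetween_add_ncard_arcsBetween_compl [Finite V] {T : Digr V}
    (hT : T.IsTournament) (X : Set V) :
    (arcsBetween T X Xᶜ).ncard + (arcsBetween T Xᶜ X).ncard = X.ncard * Xᶜ.ncard := by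
  rw [hT.ncard_arcsBetween_add_ncard_arcsBetween, ← Set.ncard_prod]
  congr 1
  ext ⟨u, v⟩
  simp only [Set.mem_ofPred_eq, Set.mem_prod, Set.mem_compl_iff]
  exact ⟨fun h => ⟨h.1, h.2.1⟩, fun ⟨hu, hv⟩ => ⟨hu, hv, fun huv => hv (huv ▸ hu)⟩⟩

theorem IsTournament.two_mul_ncard_arcsBetween_self [Fintype V] {T : Digr V}
    (hT : T.IsTournament) (S : Finset V) :
    2 * (arcsBetween T S S).ncard = #S * #S - #S := by
  rw [two_mul, hT.ncard_arcsBetween_add_ncard_arcsBetween, ← offDiag_card, ← Set.ncard_coe_finset,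
    coe_offDiag]
  rfl

theorem IsTournament.two_mul_ncard_arcsBetween_compl_add_sum_outdeg [Fintype V] {T : Digr V}
    (hT : T.IsTournament) (S : Finset V) :
    2 * ((arcsBetween T (↑S)ᶜ S).ncard + ∑ v ∈ S, T.outdeg v)
      = 2 * (#S * #Sᶜ) + (#S * #S - #S) := by
  have hcross := hT.ncard_arcsBetween_add_ncard_arcsBetween_compl S
  rw [← coe_compl, Set.ncard_coe_finset, Set.ncard_coe_finset] at hcross
  rw [sum_outdeg_eq_ncard_arcsBetween_univ, ncard_arcsBetween_univ,
    ← hT.two_mul_ncard_arcsBetween_self, ← hcross, coe_compl]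
  ring

theorem IsTournament.ncard_arcsBetween_compl_le_of_sum_outdeg_le [Fintype V] {T : Digr V}
    (hT : T.IsTournament) {S S' : Finset V} (hcard : #S' = #S)
    (hsum : ∑ v ∈ S', T.outdeg v ≤ ∑ v ∈ S, T.outdeg v) :
    (arcsBetween T (↑S)ᶜ S).ncard ≤ (arcsBetween T (↑S')ᶜ S').ncard := by
  have h := hT.two_mul_ncard_arcsBetween_compl_add_sum_outdeg S
  have h' := hT.two_mul_ncard_arcsBetween_compl_add_sum_outdeg S'
  simp only [card_compl, hcard] at h h'
  omega

end Digr

theorem cutAt_eq_arcsBetween_filter [Fintype V] (T : Digr V) (σ : V → ℕ) (γ : ℕ) :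
    cutAt T σ γ
      = arcsBetween T (↑(univ.filter fun v => σ v ≤ γ))ᶜ ↑(univ.filter fun v => σ v ≤ γ) := by
  ext e
  simp [cutAt, arcsBetween]

theorem IsOrdering.card_filter_le [Fintype V] {σ : V → ℕ} (hσ : IsOrdering σ) {γ : ℕ}
    (hγ : γ ≤ Fintype.card V) : #(univ.filter fun v => σ v ≤ γ) = γ := by
  have hpre : ↑(univ.filter fun v => σ v ≤ γ) = σ ⁻¹' Set.Icc 1 γ := by
    ext v
    simpa using fun _ => (hσ.mapsTo (Set.mem_univ v)).1
  have hrange : Set.Icc 1 γ ⊆ Set.range σ := by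
    rw [← Set.image_univ]
    exact (Set.Icc_subset_Icc_right hγ).trans hσ.surjOn
  rw [← Set.ncard_coe_finset, hpre, Set.ncard_preimage_of_injective_subset_range
    (Set.injOn_univ.mp hσ.injOn) hrange, Set.ncard_Icc_nat]
  omega

theorem ncard_cutAt_le_of_sorted_by_outdegree [Fintype V] {T : Digr V} (hT : T.IsTournament)
    {σ τ : V → ℕ} (hσ : IsOrdering σ) (hsort : ∀ u v : V, σ u < σ v → T.outdeg v ≤ T.outdeg u)
    (hτ : IsOrdering τ) {γ : ℕ} (hγ : γ ≤ Fintype.card V) :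
    (cutAt T σ γ).ncard ≤ (cutAt T τ γ).ncard := by
  have hcard := (hτ.card_filter_le hγ).trans (hσ.card_filter_le hγ).symm
  rw [cutAt_eq_arcsBetween_filter, cutAt_eq_arcsBetween_filter]
  refine hT.ncard_arcsBetween_compl_le_of_sum_outdeg_le hcard
    (sum_le_sum_of_card_eq_of_forall_le hcard fun w hw v hv => ?_)
  simp only [mem_sdiff, mem_filter, mem_univ, true_and, not_le] at hv hw
  exact hsort v w (hv.1.trans_lt hw.2)

theorem width_le_of_sorted_by_outdegree [Fintype V] {T : Digr V} (hT : T.IsTournament)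
    {σ τ : V → ℕ} (hσ : IsOrdering σ) (hsort : ∀ u v : V, σ u < σ v → T.outdeg v ≤ T.outdeg u)
    (hτ : IsOrdering τ) : width T σ ≤ width T τ :=
  Finset.sup_le fun _ hγ =>
    (ncard_cutAt_le_of_sorted_by_outdegree hT hσ hsort hτ
      (Nat.lt_succ_iff.mp (mem_range.mp hγ))).trans
      (le_sup (f := fun γ => (cutAt T τ γ).ncard) hγ)

/-- sorting the vertices of a tournament by non-increasing outdegree
yields an ordering of optimum width. -/
theorem width_eq_ctw_of_sorted_by_outdegree
    {V : Type} [Fintype V] (T : Digr V) (hT : T.IsTournament)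
    (σ : V → ℕ) (hσ : IsOrdering σ)
    (hsort : ∀ u v : V, σ u < σ v → T.outdeg v ≤ T.outdeg u) :
    width T σ = ctw T :=
  le_antisymm
    (le_csInf ⟨_, σ, hσ, rfl⟩ fun _ ⟨_, hτ, hw⟩ =>
      hw ▸ width_le_of_sorted_by_outdegree hT hσ hsort hτ)
    (Nat.sInf_le ⟨σ, hσ, rfl⟩)

end TournamentPaper
end

section
/- Let T be a tournament, σ an ordering of T, c a positive integer, and I a c-flat σ-interval. Then there exists a function ξ from the set of σ-backward arcs of T having at least one endpoint in I to {1,…,3c} such that for every γ with 1 ≤ γ ≤ |V(T)|−1 and every two distinct arcs a₁, a₂ ∈ cut_σ[γ] each having at least one endpoint in I, we have ξ(a₁) ≠ ξ(a₂). -/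
namespace TournamentPaper

open Classical

variable {V : Type}

/-!
A backward arc with an end in `I = σ(a,b]` lies in `∂⁺(I)`, in `∂⁻(I)`, or inside `T[I]`, and
each of these three classes gets its own `c` colours. The first two classes have at most `c` arcs.
A backward arc `(u, v)` lies in the `γ`-cut exactly when `γ ∈ [σ v, σ u)`, so colouring the inner
backward arcs is colouring an interval graph whose cliques have at most `c` elements (the width of
`σ` on `T[I]`); colouring the intervals greedily by left endpoint uses only `c` colours.
-/

theorem exists_lt_notMem_image_of_ncard_lt {α : Type*} {c : ℕ} (f : α → ℕ) {t : Set α}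
    (ht : t.Finite) (h : t.ncard < c) : ∃ k < c, k ∉ f '' t :=
  Set.exists_mem_notMem_of_ncard_lt_ncard (t := Set.Iio c)
    ((Set.ncard_image_le ht).trans_lt (by rwa [Set.ncard_Iio_nat])) (ht.image f)

theorem exists_interval_coloring {α β : Type*} [LinearOrder β] {l r : α → β} {c : ℕ}
    {s : Set α} (hs : s.Finite) (hlr : ∀ x ∈ s, l x < r x)
    (hcard : ∀ γ, {x ∈ s | l x ≤ γ ∧ γ < r x}.ncard ≤ c) :
    ∃ f : α → ℕ, (∀ x ∈ s, f x < c) ∧ ∀ γ, Set.InjOn f {x ∈ s | l x ≤ γ ∧ γ < r x} := by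
  lift s to Finset α using hs
  induction s using Finset.induction_on_max_value l with
  | empty => simp
  | insert a s has hmax ih =>
    push_cast at hlr hcard ⊢
    have hsub : ∀ γ, {x ∈ (s : Set α) | l x ≤ γ ∧ γ < r x} ⊆
        {x ∈ insert a (s : Set α) | l x ≤ γ ∧ γ < r x} :=
      fun γ x hx => ⟨Set.mem_insert_of_mem a hx.1, hx.2⟩
    obtain ⟨f, hfc, hf⟩ := ih (fun x hx => hlr x (Set.mem_insert_of_mem a hx))
      fun γ => (Set.ncard_le_ncard (hsub γ)).trans (hcard γ)
    set N := {x ∈ (s : Set α) | l x ≤ l a ∧ l a < r x}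
    have hN : N.ncard < c := by
      have hins : insert a N ⊆ {x ∈ insert a (s : Set α) | l x ≤ l a ∧ l a < r x} :=
        Set.insert_subset ⟨Set.mem_insert a _, le_rfl, hlr a (Set.mem_insert a _)⟩ (hsub _)
      have := (Set.ncard_le_ncard hins).trans (hcard (l a))
      rwa [Set.ncard_insert_of_notMem (fun h => has h.1)] at this
    obtain ⟨k, hkc, hk⟩ := exists_lt_notMem_image_of_ncard_lt f (Set.toFinite N) hN
    -- `l a` is maximal, so every interval of `s` meeting `[l a, r a)` contains `l a`
    have hfk : ∀ γ, ∀ x ∈ {x ∈ (s : Set α) | l x ≤ γ ∧ γ < r x}, l a ≤ γ → f x ≠ k :=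
      fun γ x hx hγ hfx => hk ⟨x, ⟨hx.1, hmax x hx.1, hγ.trans_lt hx.2.2⟩, hfx⟩
    refine ⟨Function.update f a k, ?_, fun γ x hx y hy hxy => ?_⟩
    · rintro x (rfl | hx)
      · simpa using hkc
      · rw [Function.update_of_ne (by rintro rfl; exact has hx)]
        exact hfc x hx
    · rcases hx with ⟨rfl | hxs, hxγ⟩ <;> rcases hy with ⟨rfl | hys, hyγ⟩
      · rfl
      · have hya : y ≠ x := by rintro rfl; exact has hys
        simp only [Function.update_self, Function.update_of_ne hya] at hxy
        exact absurd hxy.symm (hfk γ y ⟨hys, hyγ⟩ hxγ.1)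
      · have hxa : x ≠ y := by rintro rfl; exact has hxs
        simp only [Function.update_self, Function.update_of_ne hxa] at hxy
        exact absurd hxy (hfk γ x ⟨hxs, hxγ⟩ hyγ.1)
      · have hxa : x ≠ a := by rintro rfl; exact has hxs
        have hya : y ≠ a := by rintro rfl; exact has hys
        simp only [Function.update_of_ne hxa, Function.update_of_ne hya] at hxy
        exact hf γ ⟨hxs, hxγ⟩ ⟨hys, hyγ⟩ hxy

theorem eq_and_eq_of_mul_add_eq_mul_add {c i j u v : ℕ} (hu : u < c) (hv : v < c)
    (h : c * i + u = c * j + v) : i = j ∧ u = v := by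
  have hc : 0 < c := by omega
  have hij : i = j := by
    have := congrArg (· / c) h
    simpa [Nat.mul_add_div hc, Nat.div_eq_of_lt hu, Nat.div_eq_of_lt hv] using this
  subst hij
  exact ⟨rfl, by omega⟩

theorem exists_coloring_of_iUnion {α ι : Type*} {k c : ℕ} (K : Fin k → Set α)
    (S : ι → Set α)
    (hK : ∀ i, ∃ f : α → ℕ, (∀ x ∈ K i, f x < c) ∧ ∀ j, Set.InjOn f (S j ∩ K i)) :
    ∃ ξ : α → ℕ, (∀ x ∈ ⋃ i, K i, ξ x < k * c) ∧ ∀ j, Set.InjOn ξ (S j ∩ ⋃ i, K i) := by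
  choose f hfc hf using hK
  refine ⟨fun x => if h : ∃ i, x ∈ K i then c * h.choose + f h.choose x else 0, ?_, ?_⟩
  · intro x hx
    have h : ∃ i, x ∈ K i := Set.mem_iUnion.1 hx
    simp only [dif_pos h]
    calc c * h.choose + f h.choose x < c * h.choose + c := by
          have := hfc _ x h.choose_spec; omega
      _ = c * (h.choose + 1) := by ring
      _ ≤ c * k := Nat.mul_le_mul_left c h.choose.isLt
      _ = k * c := Nat.mul_comm c k
  · rintro j x ⟨hxS, hx⟩ y ⟨hyS, hy⟩ hxy
    have hx' : ∃ i, x ∈ K i := Set.mem_iUnion.1 hx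
    have hy' : ∃ i, y ∈ K i := Set.mem_iUnion.1 hy
    simp only [dif_pos hx', dif_pos hy'] at hxy
    obtain ⟨hi, hfxy⟩ := eq_and_eq_of_mul_add_eq_mul_add (hfc _ x hx'.choose_spec)
      (hfc _ y hy'.choose_spec) hxy
    have hi : hx'.choose = hy'.choose := Fin.ext hi
    rw [hi] at hfxy
    exact hf _ j ⟨hxS, hi ▸ hx'.choose_spec⟩ ⟨hyS, hy'.choose_spec⟩ hfxy

theorem exists_coloring_of_cutAt [Finite V] {T : Digr V} {σ : V → ℕ} {c : ℕ} {K : Set (V × V)}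
    (hK : ∀ e ∈ K, T.Adj e.1 e.2 ∧ σ e.2 < σ e.1)
    (hcard : ∀ γ, (cutAt T σ γ ∩ K).ncard ≤ c) :
    ∃ f : V × V → ℕ, (∀ e ∈ K, f e < c) ∧ ∀ γ, Set.InjOn f (cutAt T σ γ ∩ K) := by
  have hcut : ∀ γ, cutAt T σ γ ∩ K = {e ∈ K | σ e.2 ≤ γ ∧ γ < σ e.1} := by
    intro γ
    ext e
    exact ⟨fun ⟨⟨_, h₁, h₂⟩, he⟩ => ⟨he, h₂, h₁⟩, fun ⟨he, h₂, h₁⟩ => ⟨⟨(hK e he).1, h₁, h₂⟩, he⟩⟩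
  simp only [hcut] at hcard ⊢
  exact exists_interval_coloring (Set.toFinite K) (fun e he => (hK e he).2) hcard

def innerBackwardArcs (T : Digr V) (σ : V → ℕ) (a b : ℕ) : Set (V × V) :=
  {e ∈ arcsBetween T (interval σ a b) (interval σ a b) | σ e.2 < σ e.1}

theorem cutAt_inter_innerBackwardArcs_subset {T : Digr V} {σ : V → ℕ} {a b : ℕ} (γ : ℕ) :
    cutAt T σ γ ∩ innerBackwardArcs T σ a b ⊆ cutAt (T.induce (interval σ a b)) σ γ :=
  fun _ ⟨⟨_, h₁, h₂⟩, ⟨hadj, hu, hv⟩, _⟩ => ⟨⟨hu, hv, hadj⟩, h₁, h₂⟩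

section Flat

variable [Fintype V] {T : Digr V} {σ : V → ℕ} {a b : ℕ} {e : V × V}

theorem backward_of_mem_dPlus (he : e ∈ dPlus T σ a b) : T.Adj e.1 e.2 ∧ σ e.2 < σ e.1 :=
  ⟨he.1, he.2.2.2.trans_lt he.2.1.1⟩

theorem backward_of_mem_dMinus (he : e ∈ dMinus T σ a b) : T.Adj e.1 e.2 ∧ σ e.2 < σ e.1 :=
  ⟨he.1, he.2.2.2.trans_lt he.2.1.1⟩

theorem mem_dPlus_or_mem_dMinus_or_mem_innerBackwardArcs
    (hσ : ∀ v, σ v ∈ Set.Icc 1 (Fintype.card V)) (hadj : T.Adj e.1 e.2)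
    (hback : σ e.2 < σ e.1) (hI : e.1 ∈ interval σ a b ∨ e.2 ∈ interval σ a b) :
    e ∈ dPlus T σ a b ∨ e ∈ dMinus T σ a b ∨ e ∈ innerBackwardArcs T σ a b := by
  have h₁ := hσ e.1
  have h₂ := hσ e.2
  simp only [dPlus, dMinus, innerBackwardArcs, arcsBetween, interval,
    Set.mem_ofPred_eq, Set.mem_Icc, hadj, hback, true_and, and_true] at hI h₁ h₂ ⊢
  omega

end Flat

theorem exists_coloring_of_backward_arcs_general
    {V : Type} [Fintype V] (T : Digr V)
    (σ : V → ℕ) (hσ : IsOrdering σ) (c : ℕ)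
    (a b : ℕ)
    (hflat : Flat T σ a b c) :
    ∃ ξ : V × V → ℕ,
      (∀ e : V × V, T.Adj e.1 e.2 → σ e.2 < σ e.1 →
        (e.1 ∈ interval σ a b ∨ e.2 ∈ interval σ a b) →
        1 ≤ ξ e ∧ ξ e ≤ 3 * c) ∧
      (∀ γ : ℕ, 1 ≤ γ → γ + 1 ≤ Fintype.card V →
        ∀ e₁ ∈ cutAt T σ γ, ∀ e₂ ∈ cutAt T σ γ,
          (e₁.1 ∈ interval σ a b ∨ e₁.2 ∈ interval σ a b) →
          (e₂.1 ∈ interval σ a b ∨ e₂.2 ∈ interval σ a b) →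
          e₁ ≠ e₂ → ξ e₁ ≠ ξ e₂) := by
  obtain ⟨hplus, hminus, hinner⟩ := hflat
  let K := ![dPlus T σ a b, dMinus T σ a b, innerBackwardArcs T σ a b]
  obtain ⟨ξ, hξc, hξinj⟩ := exists_coloring_of_iUnion K (cutAt T σ) fun i => by
    fin_cases i
    · exact exists_coloring_of_cutAt (fun e => backward_of_mem_dPlus)
        fun γ => (Set.ncard_inter_le_ncard_right _ _).trans hplus
    · exact exists_coloring_of_cutAt (fun e => backward_of_mem_dMinus)
        fun γ => (Set.ncard_inter_le_ncard_right _ _).trans hminus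
    · exact exists_coloring_of_cutAt (fun e he => ⟨he.1.1, he.2⟩)
        fun γ => (Set.ncard_le_ncard (cutAt_inter_innerBackwardArcs_subset γ)).trans (hinner γ)
  have hcover : ∀ e : V × V, T.Adj e.1 e.2 → σ e.2 < σ e.1 →
      (e.1 ∈ interval σ a b ∨ e.2 ∈ interval σ a b) → e ∈ ⋃ i, K i := by
    intro e hadj hback hI
    simpa [K, Fin.exists_fin_succ] using mem_dPlus_or_mem_dMinus_or_mem_innerBackwardArcs
      (fun v => hσ.mapsTo (Set.mem_univ v)) hadj hback hI
  refine ⟨ξ + 1, fun e hadj hback hI => ?_, fun γ _ _ e₁ he₁ e₂ he₂ hI₁ hI₂ hne h => ?_⟩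
  · have := hξc e (hcover e hadj hback hI)
    simp only [Pi.add_apply, Pi.one_apply]
    omega
  · exact hne <| hξinj γ ⟨he₁, hcover e₁ he₁.1 (he₁.2.2.trans_lt he₁.2.1) hI₁⟩
      ⟨he₂, hcover e₂ he₂.1 (he₂.2.2.trans_lt he₂.2.1) hI₂⟩ (by simpa using h)

/-- a greedy coloring of the σ-backward arcs incident with a `c`-flat
σ-interval `I = σ(a,b]` with `3c` colors, so that arcs sharing a cut get different
colors. -/
theorem exists_coloring_of_backward_arcs
    {V : Type} [Fintype V] (T : Digr V) (hT : T.IsTournament)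
    (σ : V → ℕ) (hσ : IsOrdering σ) (c : ℕ) (hc : 0 < c)
    (a b : ℕ) (hab : a ≤ b) (hb : b ≤ Fintype.card V)
    (hflat : Flat T σ a b c) :
    ∃ ξ : V × V → ℕ,
      (∀ e : V × V, T.Adj e.1 e.2 → σ e.2 < σ e.1 →
        (e.1 ∈ interval σ a b ∨ e.2 ∈ interval σ a b) →
        1 ≤ ξ e ∧ ξ e ≤ 3 * c) ∧
      (∀ γ : ℕ, 1 ≤ γ → γ + 1 ≤ Fintype.card V →
        ∀ e₁ ∈ cutAt T σ γ, ∀ e₂ ∈ cutAt T σ γ,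
          (e₁.1 ∈ interval σ a b ∨ e₁.2 ∈ interval σ a b) →
          (e₂.1 ∈ interval σ a b ∨ e₂.2 ∈ interval σ a b) →
          e₁ ≠ e₂ → ξ e₁ ≠ ξ e₂) :=
  exists_coloring_of_backward_arcs_general T σ hσ c a b hflat

end TournamentPaper
end

section
/- Let H be a simple digraph without isolated vertices and let c_H be a constant such that every H-immersion-free tournament has cutwidth at most c_H. Let c, x, k be positive integers and let T be a tournament with ctw(T) ≤ c and |V(T)| ≥ (2c+1)(x+1)(k+1). If T contains at most k pairwise arc-disjoint immersion models of H, then there exist an ordering σ of V(T) and a σ-interval X such that T[X] is H-immersion-free, |X| ≥ x, and X is c_H-flat with respect to σ. -/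
namespace TournamentPaper

open Classical

variable {V : Type}

/-! ### Auxiliary machinery for the proof -/

section AuxLemmas

variable {V : Type}

lemma chain'_listArcs {R : V → V → Prop} :
    ∀ {l : List V}, l.Chain' R → ∀ p ∈ listArcs l, R p.1 p.2
  | [], _, p, hp => by simp [listArcs] at hp
  | [a], _, p, hp => by simp [listArcs] at hp
  | a :: b :: t, hc, p, hp => by
    have h1 : R a b ∧ (b :: t).Chain' R := List.isChain_cons_cons.mp hc
    have h2 : listArcs (a :: b :: t) = (a, b) :: listArcs (b :: t) := rfl
    rw [h2] at hp
    rcases List.mem_cons.mp hp with h | h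
    · subst h; exact h1.1
    · exact chain'_listArcs h1.2 p h

lemma listArcs_map {W : Type} (f : V → W) (l : List V) :
    listArcs (l.map f) = (listArcs l).map (Prod.map f f) := by
  unfold listArcs
  rw [← List.map_tail, List.zip_map]

/-- Transfer an immersion model along an arc-preserving map of digraph structures
on the same vertex set. -/
noncomputable def ImmersionModel.mono {VH : Type} {H : Digr VH} {G G' : Digr V}
    (M : ImmersionModel H G) (h : ∀ u v, G.Adj u v → G'.Adj u v) :
    ImmersionModel H G' where
  vmap := M.vmap
  inj := M.inj
  path := M.path
  chain e he := (M.chain e he).imp (fun {a b} hab => h a b hab)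
  nodup := M.nodup
  head := M.head
  last := M.last
  arc_disj := M.arc_disj

/-- The tournament induced on a subtype. -/
def subDigr (T : Digr V) (J : Set V) : Digr ↥J where
  Adj u v := T.Adj u v
  loopless v h := T.loopless v h

/-- Transfer an immersion model from the subtype digraph to the induced digraph. -/
noncomputable def ImmersionModel.ofSub {VH : Type} {H : Digr VH} {T : Digr V} {J : Set V}
    (M : ImmersionModel H (subDigr T J)) : ImmersionModel H (T.induce J) where
  vmap u := (M.vmap u : V)
  inj := Subtype.val_injective.comp M.inj
  path e he := (M.path e he).map Subtype.val
  chain e he := (List.isChain_map _).2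
    ((M.chain e he).imp (fun {a b} hab => ⟨a.2, b.2, hab⟩))
  nodup e he := (M.nodup e he).map Subtype.val_injective
  head e he := by rw [List.head?_map, M.head e he]; rfl
  last e he := by rw [List.getLast?_map, M.last e he]; rfl
  arc_disj e he e' he' hne x hx hx' := by
    rw [listArcs_map] at hx hx'
    obtain ⟨y, hy, rfl⟩ := List.mem_map.mp hx
    obtain ⟨y', hy', hEq⟩ := List.mem_map.mp hx'
    have hyy : y' = y :=
      (Subtype.val_injective.prodMap Subtype.val_injective) hEq
    subst hyy
    exact M.arc_disj e he e' he' hne y' hy hy'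

lemma exists_ordering (V : Type) [Fintype V] : ∃ σ : V → ℕ, IsOrdering σ := by
  obtain ⟨e⟩ : Nonempty (V ≃ Fin (Fintype.card V)) := ⟨Fintype.equivFin V⟩
  refine ⟨fun v => (e v : ℕ) + 1, ?_, ?_, ?_⟩
  · intro v _
    have h1 := (e v).isLt
    show 1 ≤ (e v : ℕ) + 1 ∧ (e v : ℕ) + 1 ≤ Fintype.card V
    omega
  · intro u _ v _ h
    have h2 : (e u : ℕ) + 1 = (e v : ℕ) + 1 := h
    have : e u = e v := Fin.ext (by omega)
    exact e.injective this
  · intro m hm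
    simp only [Set.mem_Icc] at hm
    refine ⟨e.symm ⟨m - 1, by omega⟩, Set.mem_univ _, ?_⟩
    show ((e (e.symm ⟨m - 1, by omega⟩)) : ℕ) + 1 = m
    rw [Equiv.apply_symm_apply]
    show m - 1 + 1 = m
    omega

lemma ctw_attained (V : Type) [Fintype V] (T : Digr V) :
    ∃ σ : V → ℕ, IsOrdering σ ∧ width T σ = ctw T := by
  obtain ⟨σ, hσ⟩ := exists_ordering V
  have : ctw T ∈ {w | ∃ σ : V → ℕ, IsOrdering σ ∧ width T σ = w} :=
    Nat.sInf_mem ⟨width T σ, σ, hσ, rfl⟩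
  exact this

lemma cut_le_width [Fintype V] (T : Digr V) (σ : V → ℕ) {γ : ℕ}
    (hγ : γ ≤ Fintype.card V) : (cutAt T σ γ).ncard ≤ width T σ :=
  Finset.le_sup (f := fun γ => (cutAt T σ γ).ncard)
    (Finset.mem_range.mpr (Nat.lt_succ_of_le hγ))

lemma image_interval [Fintype V] {σ : V → ℕ} (hσ : IsOrdering σ) {a b : ℕ}
    (hb : b ≤ Fintype.card V) : σ '' (interval σ a b) = Set.Ioc a b := by
  apply Set.Subset.antisymm
  · rintro m ⟨v, hv, rfl⟩
    exact ⟨hv.1, hv.2⟩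
  · intro m hm
    obtain ⟨h1, h2⟩ := hm
    obtain ⟨v, -, rfl⟩ := hσ.surjOn (show m ∈ Set.Icc 1 (Fintype.card V) by
      simp only [Set.mem_Icc]; omega)
    exact ⟨v, ⟨h1, h2⟩, rfl⟩

lemma ncard_interval [Fintype V] {σ : V → ℕ} (hσ : IsOrdering σ) {a b : ℕ}
    (hb : b ≤ Fintype.card V) : (interval σ a b).ncard = b - a := by
  rw [← Set.ncard_image_of_injOn (hσ.injOn.mono (Set.subset_univ _)),
    image_interval hσ hb, ← Finset.coe_Ioc, Set.ncard_coe_finset, Nat.card_Ioc]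

lemma block_disj {L s i j : ℕ} (h1 : i * L < s) (h2 : s ≤ i * L + L)
    (h3 : j * L < s) (h4 : s ≤ j * L + L) : i = j := by
  rcases Nat.lt_trichotomy i j with h | h | h
  · have h5 : (i + 1) * L ≤ j * L := Nat.mul_le_mul_right L h
    have h6 : (i + 1) * L = i * L + L := by ring
    omega
  · exact h
  · have h5 : (j + 1) * L ≤ i * L := Nat.mul_le_mul_right L h
    have h6 : (j + 1) * L = j * L + L := by ring
    omega

lemma ncard_le_width_of_subset_image {V' : Type} [Fintype V'] {T' : Digr V'}
    {τ : V' → ℕ} {S : Set (V × V)} {γ : ℕ} {f : V' → V} (hγ : γ ≤ Fintype.card V')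
    (h : S ⊆ Prod.map f f '' cutAt T' τ γ) : S.ncard ≤ width T' τ := by
  have h1 : S.ncard ≤ (Prod.map f f '' cutAt T' τ γ).ncard :=
    Set.ncard_le_ncard h ((Set.toFinite _).image _)
  have h2 : (Prod.map f f '' cutAt T' τ γ).ncard ≤ (cutAt T' τ γ).ncard :=
    Set.ncard_image_le (Set.toFinite _)
  exact le_trans (le_trans h1 h2) (cut_le_width T' τ hγ)

end AuxLemmas

/-- finding a long, flat, `H`-immersion-free interval in a tournament
of small cutwidth containing at most `k` arc-disjoint immersion copies of `H`. -/
theorem exists_flat_free_interval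
    {VH V : Type} [Fintype VH] [Fintype V] (H : Digr VH)
    (hiso : ∀ v : VH, ∃ u : VH, H.Adj v u ∨ H.Adj u v)
    (cH : ℕ)
    (hcH : ∀ (W : Type) [Fintype W] (T' : Digr W),
      T'.IsTournament → ¬ HasImm H T' → ctw T' ≤ cH)
    (c x k : ℕ) (hc : 0 < c) (hx : 0 < x) (hk : 0 < k)
    (T : Digr V) (hT : T.IsTournament)
    (hctw : ctw T ≤ c)
    (hsize : (2 * c + 1) * (x + 1) * (k + 1) ≤ Fintype.card V)
    (hpack : ¬ ∃ M : Fin (k + 1) → ImmersionModel H T, ArcDisjointModels M) :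
    ∃ (σ : V → ℕ), IsOrdering σ ∧
      ∃ a b : ℕ, a ≤ b ∧ b ≤ Fintype.card V ∧
        ¬ HasImm H (T.induce (interval σ a b)) ∧
        x ≤ (interval σ a b).ncard ∧
        Flat T σ a b cH := by
  classical
  set L := (2 * c + 1) * (x + 1) with hLdef
  -- Step A: an optimal ordering of T
  obtain ⟨σ₀, hσ₀, hw₀⟩ := ctw_attained V T
  have hw₀c : width T σ₀ ≤ c := le_trans (le_of_eq hw₀) hctw
  -- Step B: one of the k+1 long blocks induces an H-immersion-free subtournament
  have hstepB : ∃ i : Fin (k + 1),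
      ¬ HasImm H (T.induce (interval σ₀ ((i : ℕ) * L) ((i : ℕ) * L + L))) := by
    by_contra hcon
    push_neg at hcon
    have hmod : ∀ i : Fin (k + 1),
        ImmersionModel H (T.induce (interval σ₀ ((i : ℕ) * L) ((i : ℕ) * L + L))) :=
      fun i => (hcon i).some
    apply hpack
    refine ⟨fun i => (hmod i).mono (fun u v h => h.2.2), ?_⟩
    intro i j hij
    rw [Set.disjoint_left]
    intro p hpi hpj
    have harc : ∀ (i : Fin (k + 1)) (p : V × V),
        (∃ e he, p ∈ listArcs ((hmod i).path e he)) →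
        (i : ℕ) * L < σ₀ p.1 ∧ σ₀ p.1 ≤ (i : ℕ) * L + L := by
      rintro i p ⟨e, he, hp⟩
      have h := chain'_listArcs ((hmod i).chain e he) p hp
      exact ⟨h.1.1, h.1.2⟩
    have h1 := harc i p hpi
    have h2 := harc j p hpj
    exact hij (Fin.val_injective (block_disj h1.1 h1.2 h2.1 h2.2))
  obtain ⟨i0, hfreeJ0⟩ := hstepB
  set a₀ := (i0 : ℕ) * L with ha₀def
  set b₀ := a₀ + L with hb₀def
  set J := interval σ₀ a₀ b₀ with hJdef
  have hJmem : ∀ v, v ∈ J ↔ (a₀ < σ₀ v ∧ σ₀ v ≤ b₀) := fun v => Iff.rfl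
  have hb₀n : b₀ ≤ Fintype.card V := by
    have h1 : ((i0 : ℕ) + 1) * L ≤ (k + 1) * L :=
      Nat.mul_le_mul_right L (by have := i0.isLt; omega)
    have h2 : ((i0 : ℕ) + 1) * L = (i0 : ℕ) * L + L := by ring
    have h3 : (k + 1) * L = L * (k + 1) := by ring
    omega
  -- Step C: the subtype tournament on J and its reordering
  haveI : Fintype ↥J := (Set.toFinite J).fintype
  have hcardJ : Fintype.card ↥J = L := by
    rw [← Nat.card_eq_fintype_card, Nat.card_coe_set_eq, hJdef,
      ncard_interval hσ₀ hb₀n]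
    omega
  set TJ := subDigr T J with hTJdef
  have hTJ : TJ.IsTournament := fun u v huv =>
    hT u v (fun h => huv (Subtype.ext h))
  have hfreeTJ : ¬ HasImm H TJ := fun h => hfreeJ0 ⟨h.some.ofSub⟩
  obtain ⟨τ, hτ, hwτ⟩ := ctw_attained ↥J TJ
  have hwτcH : width TJ τ ≤ cH :=
    le_trans (le_of_eq hwτ) (hcH ↥J TJ hTJ hfreeTJ)
  have hτIcc : ∀ u : ↥J, 1 ≤ τ u ∧ τ u ≤ L := by
    intro u
    have h := hτ.mapsTo (Set.mem_univ u)
    rw [hcardJ] at h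
    simpa using h
  -- Step D: the modified ordering σ'
  set σ' : V → ℕ := fun v => if h : v ∈ J then a₀ + τ ⟨v, h⟩ else σ₀ v with hσ'def
  have hσ'mem : ∀ v (h : v ∈ J), σ' v = a₀ + τ ⟨v, h⟩ := by
    intro v h; simp only [hσ'def]; rw [dif_pos h]
  have hσ'nJ : ∀ v, v ∉ J → σ' v = σ₀ v := by
    intro v h; simp only [hσ'def]; rw [dif_neg h]
  have hJiff : ∀ v, v ∈ J ↔ (a₀ < σ' v ∧ σ' v ≤ b₀) := by
    intro v
    constructor
    · intro h
      have h1 := hσ'mem v h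
      have h2 := hτIcc ⟨v, h⟩
      omega
    · intro h
      by_contra hv
      have h1 := hσ'nJ v hv
      have h2 : ¬(a₀ < σ₀ v ∧ σ₀ v ≤ b₀) := fun hc => hv ((hJmem v).2 hc)
      omega
  have hσ' : IsOrdering σ' := by
    refine ⟨?_, ?_, ?_⟩
    · intro v _
      simp only [Set.mem_Icc]
      by_cases h : v ∈ J
      · have h1 := hσ'mem v h
        have h2 := hτIcc ⟨v, h⟩
        omega
      · have h1 := hσ'nJ v h
        have h2 := hσ₀.mapsTo (Set.mem_univ v)
        simp only [Set.mem_Icc] at h2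
        omega
    · intro u _ v _ h
      by_cases hu : u ∈ J <;> by_cases hv : v ∈ J
      · have h1 := hσ'mem u hu
        have h2 := hσ'mem v hv
        have h3 : τ ⟨u, hu⟩ = τ ⟨v, hv⟩ := by omega
        have h4 := hτ.injOn (Set.mem_univ (⟨u, hu⟩ : ↥J)) (Set.mem_univ ⟨v, hv⟩) h3
        exact congrArg Subtype.val h4
      · exfalso
        have h1 := (hJiff u).1 hu
        have h2 : ¬(a₀ < σ' v ∧ σ' v ≤ b₀) := fun hc => hv ((hJiff v).2 hc)
        omega
      · exfalso
        have h1 := (hJiff v).1 hv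
        have h2 : ¬(a₀ < σ' u ∧ σ' u ≤ b₀) := fun hc => hu ((hJiff u).2 hc)
        omega
      · have h1 := hσ'nJ u hu
        have h2 := hσ'nJ v hv
        exact hσ₀.injOn (Set.mem_univ u) (Set.mem_univ v) (by omega)
    · intro m hm
      simp only [Set.mem_Icc] at hm
      by_cases hmJ : a₀ < m ∧ m ≤ b₀
      · have hmem : m - a₀ ∈ Set.Icc 1 (Fintype.card ↥J) := by
          rw [hcardJ]; simp only [Set.mem_Icc]; omega
        obtain ⟨u, -, hu⟩ := hτ.surjOn hmem
        refine ⟨(u : V), Set.mem_univ _, ?_⟩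
        have h5 : σ' (u : V) = a₀ + τ u := hσ'mem (u : V) u.2
        omega
      · obtain ⟨v, -, hv⟩ := hσ₀.surjOn (show m ∈ Set.Icc 1 (Fintype.card V) by
          simp only [Set.mem_Icc]; omega)
        have hvJ : v ∉ J := fun hc => hmJ (by have := (hJmem v).1 hc; omega)
        exact ⟨v, Set.mem_univ _, by rw [hσ'nJ v hvJ]; exact hv⟩
  -- Step E: the bad vertices
  set Bout : Set V := {v | v ∈ J ∧ ∃ w, T.Adj v w ∧ σ₀ w ≤ a₀} with hBoutdef
  set Bin : Set V := {v | v ∈ J ∧ ∃ w, T.Adj w v ∧ b₀ < σ₀ w} with hBindef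
  have hgOutEx : ∀ v : V, ∃ w, v ∈ Bout → (T.Adj v w ∧ σ₀ w ≤ a₀) := by
    intro v
    by_cases h : v ∈ Bout
    · exact ⟨h.2.choose, fun _ => h.2.choose_spec⟩
    · exact ⟨v, fun hc => absurd hc h⟩
  obtain ⟨gOut, hgOut⟩ := Classical.axiomOfChoice hgOutEx
  have hgInEx : ∀ v : V, ∃ w, v ∈ Bin → (T.Adj w v ∧ b₀ < σ₀ w) := by
    intro v
    by_cases h : v ∈ Bin
    · exact ⟨h.2.choose, fun _ => h.2.choose_spec⟩
    · exact ⟨v, fun hc => absurd hc h⟩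
  obtain ⟨gIn, hgIn⟩ := Classical.axiomOfChoice hgInEx
  have hBout : Bout.ncard ≤ c := by
    have h0 : (cutAt T σ₀ a₀).ncard ≤ c :=
      le_trans (cut_le_width T σ₀ (by omega)) hw₀c
    refine le_trans (Set.ncard_le_ncard_of_injOn
      (fun v => (v, gOut v)) ?_ ?_ (Set.toFinite _)) h0
    · intro v hv
      exact ⟨(hgOut v hv).1, ((hJmem v).1 hv.1).1, (hgOut v hv).2⟩
    · intro v₁ _ v₂ _ h
      exact congrArg Prod.fst h
  have hBin : Bin.ncard ≤ c := by
    have h0 : (cutAt T σ₀ b₀).ncard ≤ c :=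
      le_trans (cut_le_width T σ₀ hb₀n) hw₀c
    refine le_trans (Set.ncard_le_ncard_of_injOn
      (fun v => (gIn v, v)) ?_ ?_ (Set.toFinite _)) h0
    · intro v hv
      exact ⟨(hgIn v hv).1, (hgIn v hv).2, ((hJmem v).1 hv.1).2⟩
    · intro v₁ _ v₂ _ h
      exact congrArg Prod.snd h
  have hBad : (Bout ∪ Bin).ncard ≤ 2 * c :=
    le_trans (Set.ncard_union_le _ _) (by omega)
  -- Step F: pigeonhole — a block of J avoiding all bad vertices
  have hpig : ∃ jj : Fin (2 * c + 1), ∀ v ∈ Bout ∪ Bin,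
      ¬(a₀ + (jj : ℕ) * (x + 1) < σ' v ∧ σ' v ≤ a₀ + ((jj : ℕ) + 1) * (x + 1)) := by
    by_contra hcon2
    push_neg at hcon2
    choose f hf1 hf2 hf3 using hcon2
    have hinj : Function.Injective f := by
      intro j j' h
      apply Fin.val_injective
      have e2 := hf2 j
      have e3 := hf3 j
      have e2' := hf2 j'
      have e3' := hf3 j'
      rw [h] at e2 e3
      have hm1 : ((j : ℕ) + 1) * (x + 1) = (j : ℕ) * (x + 1) + (x + 1) := by ring
      have hm2 : ((j' : ℕ) + 1) * (x + 1) = (j' : ℕ) * (x + 1) + (x + 1) := by ring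
      refine block_disj (L := x + 1) (s := σ' (f j') - a₀) ?_ ?_ ?_ ?_ <;> omega
    have hcard : (2 * c + 1 : ℕ) ≤ (Bout ∪ Bin).ncard := by
      have h1 : Nat.card (Fin (2 * c + 1)) ≤ Nat.card ↥(Bout ∪ Bin) :=
        Nat.card_le_card_of_injective (fun j => (⟨f j, hf1 j⟩ : ↥(Bout ∪ Bin)))
          (fun j j' h => hinj (congrArg Subtype.val h))
      rwa [Nat.card_eq_fintype_card, Fintype.card_fin, Nat.card_coe_set_eq] at h1
    omega
  obtain ⟨jj, hjgood⟩ := hpig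
  set a := a₀ + (jj : ℕ) * (x + 1) with hadef
  set b := a₀ + ((jj : ℕ) + 1) * (x + 1) with hbdef
  have hmul1 : ((jj : ℕ) + 1) * (x + 1) = (jj : ℕ) * (x + 1) + (x + 1) := by ring
  have hab : a ≤ b := by omega
  have hbb₀ : b ≤ b₀ := by
    have h1 : ((jj : ℕ) + 1) * (x + 1) ≤ (2 * c + 1) * (x + 1) :=
      Nat.mul_le_mul_right (x + 1) (by have := jj.isLt; omega)
    omega
  have hbn : b ≤ Fintype.card V := le_trans hbb₀ hb₀n
  have hI'J : ∀ v, v ∈ interval σ' a b → v ∈ J := by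
    intro v hv
    have h1 : a < σ' v := hv.1
    have h2 : σ' v ≤ b := hv.2
    exact (hJiff v).2 ⟨by omega, by omega⟩
  -- the interval is H-immersion-free
  have hfreeI : ¬ HasImm H (T.induce (interval σ' a b)) := by
    rintro ⟨M0⟩
    exact hfreeJ0 ⟨M0.mono (fun u v h => ⟨hI'J u h.1, hI'J v h.2.1, h.2.2⟩)⟩
  -- the interval is long
  have hxI : x ≤ (interval σ' a b).ncard := by
    rw [ncard_interval hσ' hbn]
    omega
  -- Flatness, part 1 : ∂⁺
  have hflat1 : (dPlus T σ' a b).ncard ≤ cH := by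
    have hsub : dPlus T σ' a b ⊆
        Prod.map Subtype.val Subtype.val '' cutAt TJ τ (a - a₀) := by
      rintro ⟨u, v⟩ ⟨hAdj, hu, hv⟩
      have huJ : u ∈ J := hI'J u hu
      have hu1 : a < σ' u := hu.1
      have hu2 : σ' u ≤ b := hu.2
      have hv2 : σ' v ≤ a := hv.2
      have hvJ : v ∈ J := by
        by_contra hvJ
        have hva₀ : σ' v ≤ a₀ := by
          by_contra hgt
          exact hvJ ((hJiff v).2 ⟨by omega, by omega⟩)
        refine hjgood u (Or.inl ⟨huJ, v, hAdj, ?_⟩) ⟨hu1, hu2⟩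
        rw [← hσ'nJ v hvJ]
        exact hva₀
      have hτu := hσ'mem u huJ
      have hτv := hσ'mem v hvJ
      refine ⟨(⟨u, huJ⟩, ⟨v, hvJ⟩), ⟨hAdj, ?_, ?_⟩, rfl⟩
      · show a - a₀ < τ ⟨u, huJ⟩
        omega
      · show τ ⟨v, hvJ⟩ ≤ a - a₀
        omega
    exact le_trans (ncard_le_width_of_subset_image (by rw [hcardJ]; omega) hsub) hwτcH
  -- Flatness, part 2 : ∂⁻
  have hflat2 : (dMinus T σ' a b).ncard ≤ cH := by
    have hsub : dMinus T σ' a b ⊆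
        Prod.map Subtype.val Subtype.val '' cutAt TJ τ (b - a₀) := by
      rintro ⟨u, v⟩ ⟨hAdj, hu, hv⟩
      have hvJ : v ∈ J := hI'J v hv
      have hv1 : a < σ' v := hv.1
      have hv2 : σ' v ≤ b := hv.2
      have hu1 : b < σ' u := hu.1
      have huJ : u ∈ J := by
        by_contra huJ
        have hub₀ : b₀ < σ' u := by
          by_contra h2
          exact huJ ((hJiff u).2 ⟨by omega, by omega⟩)
        refine hjgood v (Or.inr ⟨hvJ, u, hAdj, ?_⟩) ⟨hv1, hv2⟩
        rw [← hσ'nJ u huJ]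
        exact hub₀
      have hτu := hσ'mem u huJ
      have hτv := hσ'mem v hvJ
      refine ⟨(⟨u, huJ⟩, ⟨v, hvJ⟩), ⟨hAdj, ?_, ?_⟩, rfl⟩
      · show b - a₀ < τ ⟨u, huJ⟩
        omega
      · show τ ⟨v, hvJ⟩ ≤ b - a₀
        omega
    exact le_trans (ncard_le_width_of_subset_image (by rw [hcardJ]; omega) hsub) hwτcH
  -- Flatness, part 3 : internal width
  have hflat3 : ∀ γ : ℕ, (cutAt (T.induce (interval σ' a b)) σ' γ).ncard ≤ cH := by
    intro γ
    by_cases hγ : a₀ ≤ γ ∧ γ < b₀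
    · have hsub : cutAt (T.induce (interval σ' a b)) σ' γ ⊆
          Prod.map Subtype.val Subtype.val '' cutAt TJ τ (γ - a₀) := by
        rintro ⟨u, v⟩ ⟨hAdj, h1, h2⟩
        obtain ⟨huI, hvI, hTA⟩ := hAdj
        have h1' : γ < σ' u := h1
        have h2' : σ' v ≤ γ := h2
        have huJ : u ∈ J := hI'J u huI
        have hvJ : v ∈ J := hI'J v hvI
        have hτu := hσ'mem u huJ
        have hτv := hσ'mem v hvJ
        refine ⟨(⟨u, huJ⟩, ⟨v, hvJ⟩), ⟨hTA, ?_, ?_⟩, rfl⟩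
        · show γ - a₀ < τ ⟨u, huJ⟩
          omega
        · show τ ⟨v, hvJ⟩ ≤ γ - a₀
          omega
      exact le_trans (ncard_le_width_of_subset_image (by rw [hcardJ]; omega) hsub) hwτcH
    · have hempty : cutAt (T.induce (interval σ' a b)) σ' γ = ∅ := by
        apply Set.eq_empty_iff_forall_notMem.mpr
        rintro ⟨u, v⟩ ⟨hAdj, h1, h2⟩
        obtain ⟨huI, hvI, -⟩ := hAdj
        have h1' : γ < σ' u := h1
        have h2' : σ' v ≤ γ := h2
        have hu' := (hJiff u).1 (hI'J u huI)
        have hv' := (hJiff v).1 (hI'J v hvI)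
        omega
      rw [hempty]
      simp
  exact ⟨σ', hσ', a, b, hab, hbn, hfreeI, hxI, hflat1, hflat2, hflat3⟩

end TournamentPaper
end

section
/- Let H be a simple digraph, T a tournament with an ordering σ, φ a partial immersion of H in a σ-interval I, and J ⊆ I a σ-interval. Then for every a ∈ A(H) the trace (φ(a))|_J is a scattered path in J, and the trace φ|_J is a partial immersion of H in J. -/
/-!
The trace of a piece of `φ(a)` on `J` consists of the maximal runs of its arcs incident with `J`,
so every piece of the trace is a subpath of a piece of `φ(a)`: simplicity, arc-disjointness and
membership of the arcs in `A(T[J]) ∪ ∂(J) ∪ Γ(J)` are inherited (an arc incident with `J` whose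
ends lie in `σ(0,|V|]` is of one of these kinds). A piece of the trace other than the first starts
either right after an arc avoiding `J`, or at the start of a piece of `φ(a)` other than the first,
whose tail lies outside `I ⊇ J`; either way its first arc enters `J` from outside, so it is in
`Γ⁻(J) ∪ ∂⁻(J)`, and symmetrically for last arcs. The same argument shows that `First(φ(a)|_J)`
is `First(φ(a))` when this vertex lies in `J` and is undefined otherwise (dually for `Last`), which
gives the compatibility conditions of a partial immersion.
-/

namespace TournamentPaper
open Classical

variable {V : Type}

section Scat
variable [Fintype V]

/-- Arcs allowed in a scattered path in `I = σ(a,b]`: `A(T[I]) ∪ ∂(I) ∪ Γ(I)`. -/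
def allowedArcs (T : Digr V) (σ : V → ℕ) (a b : ℕ) : Set (V × V) :=
  (T.induce (interval σ a b)).arcs ∪ dPlus T σ a b ∪ dMinus T σ a b ∪
    gPlus T σ a b ∪ gMinus T σ a b

/-- The first arc of a vertex list (if any). -/
def firstArc (p : List V) : Option (V × V) := (listArcs p).head?

/-- The last arc of a vertex list (if any). -/
def lastArc (p : List V) : Option (V × V) := (listArcs p).getLast?

/-- A scattered path in the σ-interval `σ(a,b]`. -/
structure ScatPath (T : Digr V) (σ : V → ℕ) (a b : ℕ) where
  pieces : List (List V)
  two_le : ∀ p ∈ pieces, 2 ≤ p.length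
  chain : ∀ p ∈ pieces, p.Chain' T.Adj
  nodup : ∀ p ∈ pieces, p.Nodup
  allowed : ∀ p ∈ pieces, ∀ e ∈ listArcs p, e ∈ allowedArcs T σ a b
  arc_disj : ∀ i j : ℕ, i < j → j < pieces.length →
    ∀ e ∈ listArcs (pieces.getD i []), e ∉ listArcs (pieces.getD j [])
  first_cond : ∀ i : ℕ, 0 < i → i < pieces.length →
    ∀ e, firstArc (pieces.getD i []) = some e → e ∈ gMinus T σ a b ∪ dMinus T σ a b
  last_cond : ∀ i : ℕ, i + 1 < pieces.length →
    ∀ e, lastArc (pieces.getD i []) = some e → e ∈ gPlus T σ a b ∪ dPlus T σ a b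

/-- The set of arcs of all pieces of a scattered path. -/
def ScatPath.arcSet {T : Digr V} {σ : V → ℕ} {a b : ℕ} (P : ScatPath T σ a b) :
    Set (V × V) :=
  {e | ∃ p ∈ P.pieces, e ∈ listArcs p}

/-- The beginning `First(P)` of a scattered path, if defined. -/
noncomputable def ScatPath.First {T : Digr V} {σ : V → ℕ} {a b : ℕ}
    (P : ScatPath T σ a b) : Option V :=
  match P.pieces.head? with
  | none => none
  | some p =>
    match firstArc p with
    | none => none
    | some e =>
      if e ∈ (T.induce (interval σ a b)).arcs ∪ gPlus T σ a b ∪ dPlus T σ a b then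
        some e.1 else none

/-- The end `Last(P)` of a scattered path, if defined. -/
noncomputable def ScatPath.Last {T : Digr V} {σ : V → ℕ} {a b : ℕ}
    (P : ScatPath T σ a b) : Option V :=
  match P.pieces.getLast? with
  | none => none
  | some p =>
    match lastArc p with
    | none => none
    | some e =>
      if e ∈ (T.induce (interval σ a b)).arcs ∪ gMinus T σ a b ∪ dMinus T σ a b then
        some e.2 else none

/-- `P'` is a shortening of `P`. -/
def ScatShortening {T : Digr V} {σ : V → ℕ} {a b : ℕ}
    (P' P : ScatPath T σ a b) : Prop :=
  P'.First = P.First ∧ P'.Last = P.Last ∧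
  ∃ f g : ℕ → ℕ,
    (∀ s : ℕ, s < P'.pieces.length →
      f s ≤ g s ∧ g s < P.pieces.length ∧
      (firstArc (P'.pieces.getD s [])).map Prod.fst
        = (firstArc (P.pieces.getD (f s) [])).map Prod.fst ∧
      (lastArc (P'.pieces.getD s [])).map Prod.snd
        = (lastArc (P.pieces.getD (g s) [])).map Prod.snd) ∧
    ∀ s s' : ℕ, s < s' → s' < P'.pieces.length → g s < f s'

variable {VH : Type}

/-- A partial immersion of `H` in the σ-interval `σ(a,b]`. -/
structure PartialImm (H : Digr VH) (T : Digr V) (σ : V → ℕ) (a b : ℕ) where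
  sp : ∀ e : VH × VH, H.Adj e.1 e.2 → ScatPath T σ a b
  arc_disj : ∀ (e : VH × VH) (he : H.Adj e.1 e.2) (e' : VH × VH) (he' : H.Adj e'.1 e'.2),
    e ≠ e' → ∀ x ∈ (sp e he).arcSet, x ∉ (sp e' he').arcSet
  first_eq : ∀ (e : VH × VH) (he : H.Adj e.1 e.2) (e' : VH × VH) (he' : H.Adj e'.1 e'.2),
    e.1 = e'.1 → (sp e he).First = (sp e' he').First
  first_inj : ∀ (e : VH × VH) (he : H.Adj e.1 e.2) (e' : VH × VH) (he' : H.Adj e'.1 e'.2)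
    (v : V), (sp e he).First = some v → (sp e' he').First = some v → e.1 = e'.1
  last_eq : ∀ (e : VH × VH) (he : H.Adj e.1 e.2) (e' : VH × VH) (he' : H.Adj e'.1 e'.2),
    e.2 = e'.2 → (sp e he).Last = (sp e' he').Last
  last_inj : ∀ (e : VH × VH) (he : H.Adj e.1 e.2) (e' : VH × VH) (he' : H.Adj e'.1 e'.2)
    (v : V), (sp e he).Last = some v → (sp e' he').Last = some v → e.2 = e'.2

/-- `φ'` is a shortening of the partial immersion `φ`. -/
def PartialImm.IsShortening {H : Digr VH} {T : Digr V} {σ : V → ℕ} {a b : ℕ}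
    (φ' φ : PartialImm H T σ a b) : Prop :=
  ∀ e he, ScatShortening (φ'.sp e he) (φ.sp e he)

/-- `φ` is minimal: no shortening of `φ` has a scattered path of strictly smaller size. -/
def PartialImm.Minimal {H : Digr VH} {T : Digr V} {σ : V → ℕ} {a b : ℕ}
    (φ : PartialImm H T σ a b) : Prop :=
  ∀ φ' : PartialImm H T σ a b, φ'.IsShortening φ →
    ∀ e he, ((φ.sp e he).pieces).length ≤ ((φ'.sp e he).pieces).length

/-- Whether an arc is incident with the interval `σ(a',b']`. -/
def touches (σ : V → ℕ) (a' b' : ℕ) (e : V × V) : Bool :=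
  decide ((a' < σ e.1 ∧ σ e.1 ≤ b') ∨ (a' < σ e.2 ∧ σ e.2 ≤ b'))

/-- Maximal runs of consecutive elements of a list satisfying a predicate. -/
def runs {γ : Type} (p : γ → Bool) : List γ → List (List γ)
  | [] => []
  | [x] => if p x then [[x]] else []
  | x :: y :: l =>
    let rest := runs p (y :: l)
    if p x then
      if p y then
        match rest with
        | [] => [[x]]
        | r :: rs => (x :: r) :: rs
      else [x] :: rest
    else rest

/-- Vertex list of a run of consecutive arcs. -/
def arcRunToVerts : List (V × V) → List V
  | [] => []
  | e :: r => e.1 :: e.2 :: r.map Prod.snd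

/-- The trace of a single piece on the interval `σ(a',b']`: the maximal runs of its
arcs incident with the interval, as vertex lists. -/
def tracePiece (σ : V → ℕ) (a' b' : ℕ) (p : List V) : List (List V) :=
  (runs (touches σ a' b') (listArcs p)).map arcRunToVerts

/-- The trace of a scattered path on the interval `σ(a',b']`, as a list of pieces. -/
def traceScat {T : Digr V} {σ : V → ℕ} {a b : ℕ} (P : ScatPath T σ a b)
    (a' b' : ℕ) : List (List V) :=
  (P.pieces.map (tracePiece σ a' b')).flatten

/-- `ψ` is the trace `φ|_J` of `φ` on `J = σ(a',b']` (piecewise, as data). -/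
def PartialImm.IsTraceOf {H : Digr VH} {T : Digr V} {σ : V → ℕ} {a b a' b' : ℕ}
    (ψ : PartialImm H T σ a' b') (φ : PartialImm H T σ a b) : Prop :=
  ∀ e he, (ψ.sp e he).pieces = traceScat (φ.sp e he) a' b'

/-- `P` is a gluing of `P₁` (in `σ(a,g]`) and `P₂` (in `σ(g,b]`). -/
def ScatGluing {T : Digr V} {σ : V → ℕ} (a g b : ℕ)
    (P : ScatPath T σ a b) (P₁ : ScatPath T σ a g) (P₂ : ScatPath T σ g b) : Prop :=
  P₁.pieces = traceScat P a g ∧ P₂.pieces = traceScat P g b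

/-- Scattered paths in consecutive intervals are compatible if they admit a gluing. -/
def ScatCompatible {T : Digr V} {σ : V → ℕ} (a g b : ℕ)
    (P₁ : ScatPath T σ a g) (P₂ : ScatPath T σ g b) : Prop :=
  ∃ P : ScatPath T σ a b, ScatGluing a g b P P₁ P₂

end Scat

section Runs
variable {γ : Type} {p : γ → Bool}

theorem runs_cons_of_pos {x : γ} (hx : p x) (l : List γ) :
    ∃ r rs, runs p (x :: l) = (x :: r) :: rs ∧ r <+: l := by
  induction l generalizing x with
  | nil => exact ⟨[], [], by simp [runs, hx], List.nil_prefix⟩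
  | cons y l ih =>
    by_cases hy : p y
    · obtain ⟨r, rs, hrs, hr⟩ := ih hy
      exact ⟨y :: r, rs, by simp [runs, hx, hy, hrs], (List.prefix_cons_inj _).2 hr⟩
    · exact ⟨[], runs p (y :: l), by simp [runs, hx, hy], List.nil_prefix⟩

theorem runs_cons_ne_nil {x : γ} (hx : p x) (l : List γ) : runs p (x :: l) ≠ [] := by
  obtain ⟨_, _, h, -⟩ := runs_cons_of_pos hx l
  simp [h]

theorem ne_nil_of_mem_runs {l r : List γ} (hr : r ∈ runs p l) : r ≠ [] := by
  fun_induction runs p l generalizing r <;> grind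

theorem pos_of_mem_runs {l r : List γ} (hr : r ∈ runs p l) {x : γ} (hx : x ∈ r) : p x := by
  fun_induction runs p l generalizing r <;> grind

theorem flatten_runs_sublist (l : List γ) : (runs p l).flatten.Sublist l := by
  fun_induction runs p l <;> grind

theorem infix_of_mem_runs {l r : List γ} (hr : r ∈ runs p l) : r <:+: l := by
  fun_induction runs p l generalizing r with
  | case4 x y l rest hx hy hrest => exact absurd hrest (runs_cons_ne_nil hy l)
  | case5 x y l rest hx hy r0 rs hrest =>
    obtain ⟨r', rs', hrs', hr'⟩ := runs_cons_of_pos hy l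
    have : x :: y :: r' <+: x :: y :: l := by simpa using hr'
    grind [List.IsPrefix.isInfix, List.infix_cons]
  | _ => grind [List.infix_cons, List.singleton_infix_iff]

/-- Proved together: if `p x` and `p y`, then `x` joins the first run of `y :: l`, so the later
runs of `x :: y :: l` are those in the tail of `runs p (y :: l)`. -/
theorem runs_head_boundary {l r : List γ} {z : γ} (hz : r.head? = some z) :
    (r ∈ runs p l → l.head? = some z ∨ ∃ y, p y = false ∧ [y, z] <:+: l) ∧
    (r ∈ (runs p l).tail → ∃ y, p y = false ∧ [y, z] <:+: l) := by
  have lift : ∀ {x l}, (∃ y, p y = false ∧ [y, z] <:+: l) →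
      ∃ y, p y = false ∧ [y, z] <:+: x :: l :=
    fun ⟨y, hy, h⟩ => ⟨y, hy, List.infix_cons h⟩
  fun_induction runs p l generalizing r with
  | case1 | case3 => simp
  | case2 => grind
  | case4 x y l rest hx hy hrest => exact absurd hrest (runs_cons_ne_nil hy l)
  | case5 x y l rest hx hy r0 rs hrest =>
    rename_i ih
    replace hrest : runs p (y :: l) = r0 :: rs := hrest
    have htail : r ∈ rs → ∃ y', p y' = false ∧ [y', z] <:+: x :: y :: l := fun hr =>
      lift ((ih hz).2 (by simp [hrest, hr]))
    refine ⟨fun hr => ?_, htail⟩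
    rcases List.mem_cons.1 hr with rfl | hr
    · exact .inl (by simpa using hz)
    · exact .inr (htail hr)
  | case6 x y l rest hx hy =>
    rename_i ih
    have hrest : r ∈ rest → ∃ y', p y' = false ∧ [y', z] <:+: x :: y :: l := fun hr => by
      rcases (ih hz).1 hr with h | h
      · obtain rfl : y = z := by simpa using h
        exact absurd (pos_of_mem_runs hr (List.mem_of_mem_head? hz)) hy
      · exact lift h
    refine ⟨fun hr => ?_, hrest⟩
    rcases List.mem_cons.1 hr with rfl | hr
    · exact .inl (by simpa using hz)
    · exact .inr (hrest hr)
  | case7 x y l rest hx =>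
    rename_i ih
    refine ⟨fun hr => .inr ?_, fun hr => lift ((ih hz).2 hr)⟩
    rcases (ih hz).1 hr with h | h
    · obtain rfl : y = z := by simpa using h
      exact ⟨x, by simpa using hx, ⟨[], l, rfl⟩⟩
    · exact lift h

theorem runs_getLast_boundary {l r : List γ} {z : γ} (hz : r.getLast? = some z)
    (hr : r ∈ runs p l) : l.getLast? = some z ∨ ∃ y, p y = false ∧ [z, y] <:+: l := by
  have lift : ∀ {x y l}, ((y :: l).getLast? = some z ∨ ∃ y', p y' = false ∧ [z, y'] <:+: y :: l) →
      (x :: y :: l).getLast? = some z ∨ ∃ y', p y' = false ∧ [z, y'] <:+: x :: y :: l := by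
    rintro x y l (h | ⟨y', hy', h⟩)
    · exact .inl (by rwa [List.getLast?_cons_cons])
    · exact .inr ⟨y', hy', List.infix_cons h⟩
  fun_induction runs p l generalizing r with
  | case1 | case3 => simp at hr
  | case2 => grind
  | case4 x y l rest hx hy hrest => exact absurd hrest (runs_cons_ne_nil hy l)
  | case5 x y l rest hx hy r0 rs hrest =>
    rename_i ih
    replace hrest : runs p (y :: l) = r0 :: rs := hrest
    rw [hrest] at ih
    rcases List.mem_cons.1 hr with rfl | hr
    · obtain ⟨c, r1, rfl⟩ := List.exists_cons_of_ne_nil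
        (ne_nil_of_mem_runs (hrest ▸ List.mem_cons_self : r0 ∈ runs p (y :: l)))
      exact lift (ih (by rwa [List.getLast?_cons_cons] at hz) List.mem_cons_self)
    · exact lift (ih hz (List.mem_cons_of_mem _ hr))
  | case6 x y l rest hx hy =>
    rename_i ih
    rcases List.mem_cons.1 hr with rfl | hr
    · obtain rfl : x = z := by simpa using hz
      exact .inr ⟨y, by simpa using hy, ⟨[], l, rfl⟩⟩
    · exact lift (ih hz hr)
  | case7 x y l rest hx =>
    rename_i ih
    exact lift (ih hz hr)

theorem runs_dropLast_boundary {l r : List γ} {z : γ} (hz : r.getLast? = some z)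
    (hr : r ∈ (runs p l).dropLast) : ∃ y, p y = false ∧ [z, y] <:+: l := by
  have lift : ∀ {x l}, (∃ y, p y = false ∧ [z, y] <:+: l) →
      ∃ y, p y = false ∧ [z, y] <:+: x :: l :=
    fun ⟨y, hy, h⟩ => ⟨y, hy, List.infix_cons h⟩
  fun_induction runs p l generalizing r with
  | case1 | case2 | case3 => simp at hr
  | case4 x y l rest hx hy hrest => exact absurd hrest (runs_cons_ne_nil hy l)
  | case5 x y l rest hx hy r0 rs hrest =>
    rename_i ih
    replace hrest : runs p (y :: l) = r0 :: rs := hrest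
    rw [hrest] at ih
    obtain ⟨s, rs, rfl⟩ := List.exists_cons_of_ne_nil (l := rs) (by rintro rfl; simp at hr)
    rcases List.mem_cons.1 (by simpa using hr) with rfl | hr
    · obtain ⟨c, r1, rfl⟩ := List.exists_cons_of_ne_nil
        (ne_nil_of_mem_runs (hrest ▸ List.mem_cons_self : r0 ∈ runs p (y :: l)))
      exact lift (ih (by rwa [List.getLast?_cons_cons] at hz) (by simp))
    · exact lift (ih hz (by simp [hr]))
  | case6 x y l rest hx hy =>
    rename_i ih
    rcases hrest : runs p (y :: l) with _ | ⟨s, rs⟩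
    · simp [rest, hrest] at hr
    · rw [hrest] at ih
      rcases List.mem_cons.1 (by simpa [rest, hrest] using hr) with rfl | hr
      · obtain rfl : x = z := by simpa using hz
        exact ⟨y, by simpa using hy, ⟨[], l, rfl⟩⟩
      · exact lift (ih hz (by simpa using hr))
  | case7 x y l rest hx =>
    rename_i ih
    exact lift (ih hz hr)

theorem exists_getLast?_runs {l : List γ} {z : γ} (hl : l.getLast? = some z) (hz : p z) :
    ∃ r, (runs p l).getLast? = some r ∧ r.getLast? = some z := by
  fun_induction runs p l with
  | case1 => simp at hl
  | case2 | case3 => simp_all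
  | case4 x y l rest hx hy hrest => exact absurd hrest (runs_cons_ne_nil hy l)
  | case5 x y l rest hx hy r0 rs hrest =>
    rename_i ih
    replace hrest : runs p (y :: l) = r0 :: rs := hrest
    obtain ⟨r, hr, hrz⟩ := ih (by rwa [List.getLast?_cons_cons] at hl)
    rw [hrest] at hr
    rcases rs with _ | ⟨s, rs⟩
    · obtain rfl : r0 = r := by simpa using hr
      obtain ⟨c, r1, rfl⟩ := List.exists_cons_of_ne_nil
        (ne_nil_of_mem_runs (hrest ▸ List.mem_cons_self : r0 ∈ runs p (y :: l)))
      exact ⟨x :: c :: r1, by simp, by rwa [List.getLast?_cons_cons]⟩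
    · exact ⟨r, by simpa using hr, hrz⟩
  | case6 x y l rest hx hy =>
    rename_i ih
    obtain ⟨r, hr, hrz⟩ := ih (by rwa [List.getLast?_cons_cons] at hl)
    exact ⟨r, by simp [List.getLast?_cons, rest, hr], hrz⟩
  | case7 x y l rest hx =>
    rename_i ih
    exact ih (by rwa [List.getLast?_cons_cons] at hl)

end Runs

section ListArcs

theorem listArcs_cons_cons (x y : V) (l : List V) :
    listArcs (x :: y :: l) = (x, y) :: listArcs (y :: l) := rfl

theorem isChain_iff_forall_mem_listArcs {R : V → V → Prop} :
    ∀ {l : List V}, l.IsChain R ↔ ∀ e ∈ listArcs l, R e.1 e.2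
  | [] | [_] => by simp [listArcs]
  | x :: y :: l => by
    simp [listArcs_cons_cons, isChain_iff_forall_mem_listArcs (l := y :: l)]

theorem isChain_listArcs : ∀ l : List V, (listArcs l).IsChain (fun e f => e.2 = f.1)
  | [] | [_] | [_, _] => by simp [listArcs]
  | x :: y :: z :: l => by
    simpa [listArcs_cons_cons] using isChain_listArcs (y :: z :: l)

theorem snd_eq_fst_of_infix_listArcs {l : List V} {e f : V × V}
    (h : [e, f] <:+: listArcs l) : e.2 = f.1 := by
  simpa using (isChain_listArcs l).infix h

theorem map_fst_listArcs : ∀ l : List V, (listArcs l).map Prod.fst = l.dropLast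
  | [] | [_] => rfl
  | x :: y :: l => by simp [listArcs_cons_cons, map_fst_listArcs (y :: l)]

theorem nodup_listArcs {l : List V} (h : l.Nodup) : (listArcs l).Nodup :=
  List.Nodup.of_map Prod.fst (map_fst_listArcs l ▸ h.sublist (List.dropLast_sublist l))

theorem firstArc_arcRunToVerts : ∀ r : List (V × V), firstArc (arcRunToVerts r) = r.head?
  | [] => rfl
  | _ :: _ => by simp [arcRunToVerts, firstArc, listArcs_cons_cons]

theorem listArcs_arcRunToVerts :
    ∀ {r : List (V × V)}, r.IsChain (fun e f => e.2 = f.1) → listArcs (arcRunToVerts r) = r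
  | [], _ | [_], _ => rfl
  | e :: f :: r, h => by
    simp only [List.isChain_cons_cons] at h
    have ih := listArcs_arcRunToVerts h.2
    simp only [arcRunToVerts, List.map_cons] at ih ⊢
    rw [listArcs_cons_cons, h.1, ih, ← h.1]

theorem lastArc_arcRunToVerts {r : List (V × V)} (h : r.IsChain (fun e f => e.2 = f.1)) :
    lastArc (arcRunToVerts r) = r.getLast? := by
  rw [lastArc, listArcs_arcRunToVerts h]

theorem two_le_length_arcRunToVerts {r : List (V × V)} (h : r ≠ []) :
    2 ≤ (arcRunToVerts r).length := by
  obtain ⟨e, r, rfl⟩ := List.exists_cons_of_ne_nil h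
  simp [arcRunToVerts]

theorem arcRunToVerts_prefix :
    ∀ {r : List (V × V)} {l : List V}, r ≠ [] → r <+: listArcs l → arcRunToVerts r <+: l
  | [], _, h, _ => absurd rfl h
  | _ :: _, [], _, h | _ :: _, [_], _, h => by simp [listArcs] at h
  | e :: r, x :: y :: l, _, h => by
    rw [listArcs_cons_cons, List.cons_prefix_cons] at h
    obtain ⟨rfl, h⟩ := h
    rcases r with _ | ⟨f, r⟩
    · simp [arcRunToVerts]
    · have ih := arcRunToVerts_prefix (List.cons_ne_nil _ _) h
      have hf : f.1 = y := by
        rcases l with _ | ⟨z, l⟩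
        · simp [listArcs] at h
        rw [listArcs_cons_cons] at h
        exact congrArg Prod.fst (List.cons_prefix_cons.1 h).1
      simp only [arcRunToVerts, List.map_cons, hf] at ih ⊢
      exact List.cons_prefix_cons.2 ⟨rfl, ih⟩

theorem arcRunToVerts_infix :
    ∀ {r : List (V × V)} {l : List V}, r ≠ [] → r <:+: listArcs l → arcRunToVerts r <:+: l
  | _, [], hr, h | _, [_], hr, h => (hr (List.eq_nil_of_infix_nil h)).elim
  | _, x :: y :: l, hr, h => by
    rcases List.infix_cons_iff.1 (listArcs_cons_cons x y l ▸ h) with h' | h'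
    · exact (arcRunToVerts_prefix hr (listArcs_cons_cons x y l ▸ h')).isInfix
    · exact (arcRunToVerts_infix hr h').trans (List.suffix_cons _ _).isInfix

end ListArcs

section ListIndex
variable {α : Type} {l : List α} {i : ℕ} {x : α}

theorem getD_mem_tail (d : α) (h0 : 0 < i) (h : i < l.length) : l.getD i d ∈ l.tail := by
  obtain ⟨j, rfl⟩ := Nat.exists_eq_add_of_le' h0
  rw [List.getD_eq_getElem _ _ h, ← List.getElem_tail (by simp; omega)]
  exact List.getElem_mem _

theorem exists_getD_eq_of_mem_tail (d : α) (hx : x ∈ l.tail) :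
    ∃ i, 0 < i ∧ i < l.length ∧ l.getD i d = x := by
  obtain ⟨j, hj, rfl⟩ := List.mem_iff_getElem.1 hx
  simp only [List.length_tail] at hj
  refine ⟨j + 1, j.succ_pos, by omega, ?_⟩
  rw [List.getD_eq_getElem _ _ (by omega), List.getElem_tail]

theorem getD_mem_dropLast (d : α) (h : i + 1 < l.length) : l.getD i d ∈ l.dropLast := by
  rw [List.getD_eq_getElem _ _ (by omega), ← List.getElem_dropLast (by simp; omega)]
  exact List.getElem_mem _

theorem exists_getD_eq_of_mem_dropLast (d : α) (hx : x ∈ l.dropLast) :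
    ∃ i, i + 1 < l.length ∧ l.getD i d = x := by
  obtain ⟨j, hj, rfl⟩ := List.mem_iff_getElem.1 hx
  simp only [List.length_dropLast] at hj
  exact ⟨j, by omega, by rw [List.getD_eq_getElem _ _ (by omega), List.getElem_dropLast]⟩

theorem pairwise_iff_getD {R : α → α → Prop} (d : α) :
    l.Pairwise R ↔ ∀ i j, i < j → j < l.length → R (l.getD i d) (l.getD j d) := by
  rw [List.pairwise_iff_getElem]
  refine ⟨fun h i j hij hj => ?_, fun h i j hi hj hij => ?_⟩
  · rw [List.getD_eq_getElem _ _ (by omega), List.getD_eq_getElem _ _ hj]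
    exact h i j _ hj hij
  · have := h i j hij hj
    rwa [List.getD_eq_getElem _ _ hi, List.getD_eq_getElem _ _ hj] at this

theorem mem_tail_flatten {L : List (List α)} (h : x ∈ L.flatten.tail) :
    (∃ l ∈ L, x ∈ l.tail) ∨ ∃ l ∈ L.tail, x ∈ l := by
  rcases L with _ | ⟨l, L⟩
  · simp at h
  · rw [List.flatten_cons, List.tail_append] at h
    split_ifs at h
    · exact .inr (List.mem_flatten.1 (List.mem_of_mem_tail h))
    · rcases List.mem_append.1 h with h | h
      · exact .inl ⟨l, List.mem_cons_self, h⟩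
      · exact .inr (List.mem_flatten.1 h)

theorem mem_dropLast_flatten {L : List (List α)} (h : x ∈ L.flatten.dropLast) :
    (∃ l ∈ L, x ∈ l.dropLast) ∨ ∃ l ∈ L.dropLast, x ∈ l := by
  obtain rfl | ⟨L, l, rfl⟩ := List.eq_nil_or_concat' L
  · simp at h
  · rw [List.flatten_concat, List.dropLast_append] at h
    rw [List.dropLast_concat]
    split_ifs at h
    · exact .inr (List.mem_flatten.1 (List.dropLast_subset _ h))
    · rcases List.mem_append.1 h with h | h
      · exact .inr (List.mem_flatten.1 h)
      · exact .inl ⟨l, by simp, h⟩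

end ListIndex

theorem interval_mono {σ : V → ℕ} {a b a' b' : ℕ} (h₁ : a ≤ a') (h₃ : b' ≤ b) :
    interval σ a' b' ⊆ interval σ a b :=
  fun _ hv => ⟨by have := hv.1; omega, by have := hv.2; omega⟩

section Classification
variable [Fintype V] {T : Digr V} {σ : V → ℕ} {a b : ℕ} {e : V × V}

theorem adj_of_mem_allowedArcs (he : e ∈ allowedArcs T σ a b) : T.Adj e.1 e.2 := by
  rcases he with (((h | h) | h) | h) | h
  exacts [h.2.2, h.1, h.1, h.1, h.1]

theorem endpoints_mem_of_mem_allowedArcs (hb : b ≤ Fintype.card V)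
    (he : e ∈ allowedArcs T σ a b) :
    (0 < σ e.1 ∧ σ e.1 ≤ Fintype.card V) ∧ 0 < σ e.2 ∧ σ e.2 ≤ Fintype.card V := by
  simp only [allowedArcs, dPlus, dMinus, gPlus, gMinus, arcsBetween, Digr.arcs, Digr.induce,
    interval, Set.mem_union, Set.mem_ofPred_eq] at he
  omega

theorem mem_allowedArcs_of_touches {a' b' : ℕ} (hb : b ≤ Fintype.card V)
    (he : e ∈ allowedArcs T σ a b) (ht : e.1 ∈ interval σ a' b' ∨ e.2 ∈ interval σ a' b') :
    e ∈ allowedArcs T σ a' b' := by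
  have hadj := adj_of_mem_allowedArcs he
  have hbounds := endpoints_mem_of_mem_allowedArcs hb he
  simp only [allowedArcs, dPlus, dMinus, gPlus, gMinus, arcsBetween, Digr.arcs, Digr.induce,
    interval, Set.mem_union, Set.mem_ofPred_eq, hadj, true_and, and_true] at ht ⊢
  omega

theorem mem_arcs_union_gPlus_union_dPlus_iff (he : e ∈ allowedArcs T σ a b) :
    e ∈ (T.induce (interval σ a b)).arcs ∪ gPlus T σ a b ∪ dPlus T σ a b ↔
      e.1 ∈ interval σ a b := by
  simp only [allowedArcs, dPlus, dMinus, gPlus, gMinus, arcsBetween, Digr.arcs, Digr.induce,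
    interval, Set.mem_union, Set.mem_ofPred_eq] at he ⊢
  grind

theorem mem_arcs_union_gMinus_union_dMinus_iff (he : e ∈ allowedArcs T σ a b) :
    e ∈ (T.induce (interval σ a b)).arcs ∪ gMinus T σ a b ∪ dMinus T σ a b ↔
      e.2 ∈ interval σ a b := by
  simp only [allowedArcs, dPlus, dMinus, gPlus, gMinus, arcsBetween, Digr.arcs, Digr.induce,
    interval, Set.mem_union, Set.mem_ofPred_eq] at he ⊢
  grind

theorem mem_gMinus_union_dMinus (he : e ∈ allowedArcs T σ a b) (h : e.1 ∉ interval σ a b) :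
    e ∈ gMinus T σ a b ∪ dMinus T σ a b := by
  simp only [allowedArcs, dPlus, dMinus, gPlus, gMinus, arcsBetween, Digr.arcs, Digr.induce,
    interval, Set.mem_union, Set.mem_ofPred_eq] at he h ⊢
  grind

theorem mem_gPlus_union_dPlus (he : e ∈ allowedArcs T σ a b) (h : e.2 ∉ interval σ a b) :
    e ∈ gPlus T σ a b ∪ dPlus T σ a b := by
  simp only [allowedArcs, dPlus, dMinus, gPlus, gMinus, arcsBetween, Digr.arcs, Digr.induce,
    interval, Set.mem_union, Set.mem_ofPred_eq] at he h ⊢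
  grind

theorem fst_not_mem_of_mem_gMinus_union_dMinus (he : e ∈ gMinus T σ a b ∪ dMinus T σ a b) :
    e.1 ∉ interval σ a b := by
  simp only [dMinus, gMinus, arcsBetween, interval, Set.mem_union, Set.mem_ofPred_eq] at he ⊢
  omega

theorem snd_not_mem_of_mem_gPlus_union_dPlus (he : e ∈ gPlus T σ a b ∪ dPlus T σ a b) :
    e.2 ∉ interval σ a b := by
  simp only [dPlus, gPlus, arcsBetween, interval, Set.mem_union, Set.mem_ofPred_eq] at he ⊢
  omega

end Classification

section ScatPathLemmas
variable [Fintype V] {T : Digr V} {σ : V → ℕ} {a b : ℕ}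

namespace ScatPath

theorem nodup_flatMap_listArcs (P : ScatPath T σ a b) : (P.pieces.flatMap listArcs).Nodup :=
  List.nodup_flatMap.2 ⟨fun p hp => nodup_listArcs (P.nodup p hp),
    (pairwise_iff_getD []).2 fun i j hij hj e hi hj' => P.arc_disj i j hij hj e hi hj'⟩

theorem firstArc_mem_of_mem_tail (P : ScatPath T σ a b) {p : List V} (hp : p ∈ P.pieces.tail)
    {e : V × V} (he : firstArc p = some e) : e ∈ gMinus T σ a b ∪ dMinus T σ a b := by
  obtain ⟨i, hi0, hi, rfl⟩ := exists_getD_eq_of_mem_tail [] hp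
  exact P.first_cond i hi0 hi e he

theorem lastArc_mem_of_mem_dropLast (P : ScatPath T σ a b) {p : List V}
    (hp : p ∈ P.pieces.dropLast) {e : V × V} (he : lastArc p = some e) :
    e ∈ gPlus T σ a b ∪ dPlus T σ a b := by
  obtain ⟨i, hi, rfl⟩ := exists_getD_eq_of_mem_dropLast [] hp
  exact P.last_cond i hi e he

def startArc (P : ScatPath T σ a b) : Option (V × V) := P.pieces.head?.bind firstArc

def endArc (P : ScatPath T σ a b) : Option (V × V) := P.pieces.getLast?.bind lastArc

theorem First_eq_some_iff {P : ScatPath T σ a b} {v : V} :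
    P.First = some v ↔ ∃ e, P.startArc = some e ∧ e.1 = v ∧ v ∈ interval σ a b := by
  unfold First startArc
  rcases hp : P.pieces.head? with _ | p
  · simp
  rcases he : firstArc p with _ | e
  · simp [he]
  have hall := P.allowed p (List.mem_of_mem_head? hp) e (List.mem_of_mem_head? he)
  simp only [Option.bind_some, he, Option.some.injEq, exists_eq_left',
    mem_arcs_union_gPlus_union_dPlus_iff hall]
  split_ifs with h <;> grind

theorem Last_eq_some_iff {P : ScatPath T σ a b} {v : V} :
    P.Last = some v ↔ ∃ e, P.endArc = some e ∧ e.2 = v ∧ v ∈ interval σ a b := by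
  unfold Last endArc
  rcases hp : P.pieces.getLast? with _ | p
  · simp
  rcases he : lastArc p with _ | e
  · simp [he]
  have hall := P.allowed p (List.mem_of_getLast? hp) e (List.mem_of_getLast? he)
  simp only [Option.bind_some, he, Option.some.injEq, exists_eq_left',
    mem_arcs_union_gMinus_union_dMinus_iff hall]
  split_ifs with h <;> grind

end ScatPath

end ScatPathLemmas

section Touches
variable {σ : V → ℕ} {a' b' : ℕ} {e : V × V}

theorem touches_eq_true_iff :
    touches σ a' b' e = true ↔ e.1 ∈ interval σ a' b' ∨ e.2 ∈ interval σ a' b' := by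
  simp [touches, interval]

theorem touches_eq_false_iff :
    touches σ a' b' e = false ↔ e.1 ∉ interval σ a' b' ∧ e.2 ∉ interval σ a' b' := by
  simp [touches, interval]

theorem isChain_of_mem_runs_listArcs {q : V × V → Bool} {p : List V} {r : List (V × V)}
    (hr : r ∈ runs q (listArcs p)) : r.IsChain (fun e f => e.2 = f.1) :=
  (isChain_listArcs p).infix (infix_of_mem_runs hr)

theorem fst_not_mem_of_mem_tail_runs {p : List V} {r : List (V × V)}
    (hr : r ∈ (runs (touches σ a' b') (listArcs p)).tail) (he : r.head? = some e) :
    e.1 ∉ interval σ a' b' := by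
  obtain ⟨y, hy, hye⟩ := (runs_head_boundary he).2 hr
  rw [← snd_eq_fst_of_infix_listArcs hye]
  exact (touches_eq_false_iff.1 hy).2

theorem firstArc_eq_of_mem_runs {p : List V} {r : List (V × V)}
    (hr : r ∈ runs (touches σ a' b') (listArcs p)) (he : r.head? = some e)
    (h1 : e.1 ∈ interval σ a' b') : firstArc p = some e := by
  rcases (runs_head_boundary he).1 hr with h | ⟨y, hy, hye⟩
  · exact h
  · exact absurd (snd_eq_fst_of_infix_listArcs hye ▸ h1) (touches_eq_false_iff.1 hy).2

theorem snd_not_mem_of_mem_dropLast_runs {p : List V} {r : List (V × V)}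
    (hr : r ∈ (runs (touches σ a' b') (listArcs p)).dropLast) (he : r.getLast? = some e) :
    e.2 ∉ interval σ a' b' := by
  obtain ⟨y, hy, hey⟩ := runs_dropLast_boundary he hr
  rw [snd_eq_fst_of_infix_listArcs hey]
  exact (touches_eq_false_iff.1 hy).1

theorem lastArc_eq_of_mem_runs {p : List V} {r : List (V × V)}
    (hr : r ∈ runs (touches σ a' b') (listArcs p)) (he : r.getLast? = some e)
    (h2 : e.2 ∈ interval σ a' b') : lastArc p = some e := by
  rcases runs_getLast_boundary he hr with h | ⟨y, hy, hey⟩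
  · exact h
  · exact absurd (snd_eq_fst_of_infix_listArcs hey ▸ h2) (touches_eq_false_iff.1 hy).1

end Touches


section Trace
variable [Fintype V] {T : Digr V} {σ : V → ℕ} {a b a' b' : ℕ} {P : ScatPath T σ a b}
  {ρ : List V} {e : V × V}

theorem mem_traceScat :
    ρ ∈ traceScat P a' b' ↔
      ∃ p ∈ P.pieces, ∃ r ∈ runs (touches σ a' b') (listArcs p), arcRunToVerts r = ρ := by
  simp [traceScat, tracePiece]

theorem flatMap_listArcs_traceScat (P : ScatPath T σ a b) :
    (traceScat P a' b').flatMap listArcs =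
      P.pieces.flatMap fun p => (runs (touches σ a' b') (listArcs p)).flatten := by
  simp only [traceScat, List.flatMap_def, List.map_flatten, List.flatten_flatten, List.map_map]
  refine congrArg List.flatten (List.map_congr_left fun p _ => ?_)
  simp only [Function.comp_apply, tracePiece, List.map_map]
  conv_rhs => rw [← List.map_id (runs _ _)]
  exact congrArg List.flatten
    (List.map_congr_left fun r hr => listArcs_arcRunToVerts (isChain_of_mem_runs_listArcs hr))

theorem mem_arcSet_of_mem_traceScat (hρ : ρ ∈ traceScat P a' b') (he : e ∈ listArcs ρ) :
    e ∈ P.arcSet ∧ touches σ a' b' e := by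
  have he' : e ∈ (traceScat P a' b').flatMap listArcs := List.mem_flatMap.2 ⟨ρ, hρ, he⟩
  rw [flatMap_listArcs_traceScat, List.mem_flatMap] at he'
  obtain ⟨p, hp, he⟩ := he'
  obtain ⟨r, hr, her⟩ := List.mem_flatten.1 he
  exact ⟨⟨p, hp, (infix_of_mem_runs hr).subset her⟩, pos_of_mem_runs hr her⟩

theorem mem_allowedArcs_of_mem_traceScat (hb : b ≤ Fintype.card V)
    (hρ : ρ ∈ traceScat P a' b') (he : e ∈ listArcs ρ) : e ∈ allowedArcs T σ a' b' := by
  obtain ⟨⟨p, hp, hep⟩, htouch⟩ := mem_arcSet_of_mem_traceScat hρ he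
  exact mem_allowedArcs_of_touches hb (P.allowed p hp e hep) (touches_eq_true_iff.1 htouch)

theorem nodup_flatMap_listArcs_traceScat (P : ScatPath T σ a b) :
    ((traceScat P a' b').flatMap listArcs).Nodup := by
  refine List.Sublist.nodup ?_ P.nodup_flatMap_listArcs
  rw [flatMap_listArcs_traceScat]
  exact List.Sublist.flatMap_right _ fun p _ => flatten_runs_sublist _

theorem fst_not_mem_of_mem_tracePiece (hJ : interval σ a' b' ⊆ interval σ a b) {p : List V}
    (hp : p ∈ P.pieces.tail) (hρ : ρ ∈ tracePiece σ a' b' p) (he : firstArc ρ = some e) :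
    e.1 ∉ interval σ a' b' := by
  obtain ⟨r, hr, rfl⟩ := List.mem_map.1 hρ
  rw [firstArc_arcRunToVerts] at he
  intro h1
  exact fst_not_mem_of_mem_gMinus_union_dMinus
    (P.firstArc_mem_of_mem_tail hp (firstArc_eq_of_mem_runs hr he h1)) (hJ h1)

theorem snd_not_mem_of_mem_tracePiece (hJ : interval σ a' b' ⊆ interval σ a b) {p : List V}
    (hp : p ∈ P.pieces.dropLast) (hρ : ρ ∈ tracePiece σ a' b' p) (he : lastArc ρ = some e) :
    e.2 ∉ interval σ a' b' := by
  obtain ⟨r, hr, rfl⟩ := List.mem_map.1 hρ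
  rw [lastArc_arcRunToVerts (isChain_of_mem_runs_listArcs hr)] at he
  intro h2
  exact snd_not_mem_of_mem_gPlus_union_dPlus
    (P.lastArc_mem_of_mem_dropLast hp (lastArc_eq_of_mem_runs hr he h2)) (hJ h2)

theorem fst_not_mem_of_mem_tail_traceScat (hJ : interval σ a' b' ⊆ interval σ a b)
    (hρ : ρ ∈ (traceScat P a' b').tail) (he : firstArc ρ = some e) :
    e.1 ∉ interval σ a' b' := by
  rcases mem_tail_flatten hρ with ⟨l, hl, hρ⟩ | ⟨l, hl, hρ⟩
  · obtain ⟨p, -, rfl⟩ := List.mem_map.1 hl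
    rw [tracePiece, ← List.map_tail] at hρ
    obtain ⟨r, hr, rfl⟩ := List.mem_map.1 hρ
    rw [firstArc_arcRunToVerts] at he
    exact fst_not_mem_of_mem_tail_runs hr he
  · rw [← List.map_tail] at hl
    obtain ⟨p, hp, rfl⟩ := List.mem_map.1 hl
    exact fst_not_mem_of_mem_tracePiece hJ hp hρ he

theorem snd_not_mem_of_mem_dropLast_traceScat (hJ : interval σ a' b' ⊆ interval σ a b)
    (hρ : ρ ∈ (traceScat P a' b').dropLast) (he : lastArc ρ = some e) :
    e.2 ∉ interval σ a' b' := by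
  rcases mem_dropLast_flatten hρ with ⟨l, hl, hρ⟩ | ⟨l, hl, hρ⟩
  · obtain ⟨p, -, rfl⟩ := List.mem_map.1 hl
    rw [tracePiece, ← List.map_dropLast] at hρ
    obtain ⟨r, hr, rfl⟩ := List.mem_map.1 hρ
    rw [lastArc_arcRunToVerts (isChain_of_mem_runs_listArcs (List.dropLast_subset _ hr))] at he
    exact snd_not_mem_of_mem_dropLast_runs hr he
  · rw [← List.map_dropLast] at hl
    obtain ⟨p, hp, rfl⟩ := List.mem_map.1 hl
    exact snd_not_mem_of_mem_tracePiece hJ hp hρ he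

theorem startArc_eq_of_mem_traceScat (hJ : interval σ a' b' ⊆ interval σ a b)
    (hρ : ρ ∈ traceScat P a' b') (he : firstArc ρ = some e) (h1 : e.1 ∈ interval σ a' b') :
    P.startArc = some e := by
  obtain ⟨l, hl, hρ⟩ := List.mem_flatten.1 hρ
  obtain ⟨p, hp, rfl⟩ := List.mem_map.1 hl
  obtain ⟨p₀, ps, hps⟩ := List.exists_cons_of_ne_nil (List.ne_nil_of_mem hp)
  rcases List.mem_cons.1 (hps ▸ hp) with rfl | hp
  · obtain ⟨r, hr, rfl⟩ := List.mem_map.1 hρ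
    rw [firstArc_arcRunToVerts] at he
    simp [ScatPath.startArc, hps, firstArc_eq_of_mem_runs hr he h1]
  · exact absurd h1 (fst_not_mem_of_mem_tracePiece (P := P) hJ (by simp [hps, hp]) hρ he)

theorem endArc_eq_of_mem_traceScat (hJ : interval σ a' b' ⊆ interval σ a b)
    (hρ : ρ ∈ traceScat P a' b') (he : lastArc ρ = some e) (h2 : e.2 ∈ interval σ a' b') :
    P.endArc = some e := by
  obtain ⟨l, hl, hρ⟩ := List.mem_flatten.1 hρ
  obtain ⟨p, hp, rfl⟩ := List.mem_map.1 hl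
  obtain ⟨ps, p₀, hps⟩ := (List.eq_nil_or_concat' _).resolve_left (List.ne_nil_of_mem hp)
  rcases List.mem_append.1 (hps ▸ hp) with hp | hp
  · exact absurd h2 (snd_not_mem_of_mem_tracePiece (P := P) hJ (by simp [hps, hp]) hρ he)
  · obtain rfl := List.mem_singleton.1 hp
    obtain ⟨r, hr, rfl⟩ := List.mem_map.1 hρ
    rw [lastArc_arcRunToVerts (isChain_of_mem_runs_listArcs hr)] at he
    simp [ScatPath.endArc, hps, lastArc_eq_of_mem_runs hr he h2]

theorem startArc_traceScat (h : P.startArc = some e) (h1 : e.1 ∈ interval σ a' b') :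
    (traceScat P a' b').head?.bind firstArc = some e := by
  obtain ⟨p, hp, he⟩ := Option.bind_eq_some_iff.1 h
  obtain ⟨ps, hps⟩ := List.head?_eq_some_iff.1 hp
  obtain ⟨as, has⟩ := List.head?_eq_some_iff.1 he
  obtain ⟨r, rs, hrs, -⟩ := runs_cons_of_pos (touches_eq_true_iff.2 (.inl h1)) as
  simp [traceScat, tracePiece, hps, has, hrs, firstArc_arcRunToVerts]

theorem endArc_traceScat (h : P.endArc = some e) (h2 : e.2 ∈ interval σ a' b') :
    (traceScat P a' b').getLast?.bind lastArc = some e := by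
  obtain ⟨p, hp, he⟩ := Option.bind_eq_some_iff.1 h
  obtain ⟨ps, hps⟩ := List.getLast?_eq_some_iff.1 hp
  obtain ⟨r, hr, hre⟩ := exists_getLast?_runs he (touches_eq_true_iff.2 (.inr h2))
  have hchain := isChain_of_mem_runs_listArcs (List.mem_of_getLast? hr)
  simp [traceScat, tracePiece, hps, List.getLast?_flatten, hr, lastArc_arcRunToVerts hchain, hre]

def ScatPath.trace (P : ScatPath T σ a b) (hJ : interval σ a' b' ⊆ interval σ a b)
    (hb : b ≤ Fintype.card V) : ScatPath T σ a' b' where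
  pieces := traceScat P a' b'
  two_le ρ hρ := by
    obtain ⟨p, -, r, hr, rfl⟩ := mem_traceScat.1 hρ
    exact two_le_length_arcRunToVerts (ne_nil_of_mem_runs hr)
  chain ρ hρ := isChain_iff_forall_mem_listArcs.2 fun e he =>
    adj_of_mem_allowedArcs (mem_allowedArcs_of_mem_traceScat hb hρ he)
  nodup ρ hρ := by
    obtain ⟨p, hp, r, hr, rfl⟩ := mem_traceScat.1 hρ
    exact (P.nodup p hp).sublist (arcRunToVerts_infix (ne_nil_of_mem_runs hr)
      (infix_of_mem_runs hr)).sublist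
  allowed ρ hρ e he := mem_allowedArcs_of_mem_traceScat hb hρ he
  arc_disj :=
    (pairwise_iff_getD []).1 (List.nodup_flatMap.1 (nodup_flatMap_listArcs_traceScat P)).2
  first_cond i hi0 hi e he :=
    have hρ := getD_mem_tail [] hi0 hi
    mem_gMinus_union_dMinus
      (mem_allowedArcs_of_mem_traceScat hb (List.mem_of_mem_tail hρ) (List.mem_of_mem_head? he))
      (fst_not_mem_of_mem_tail_traceScat hJ hρ he)
  last_cond i hi e he :=
    have hρ := getD_mem_dropLast [] hi
    mem_gPlus_union_dPlus
      (mem_allowedArcs_of_mem_traceScat hb (List.dropLast_subset _ hρ) (List.mem_of_getLast? he))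
      (snd_not_mem_of_mem_dropLast_traceScat hJ hρ he)

variable {hJ : interval σ a' b' ⊆ interval σ a b} {hb : b ≤ Fintype.card V}

theorem ScatPath.arcSet_trace_subset : (P.trace hJ hb).arcSet ⊆ P.arcSet :=
  fun _ ⟨_, hρ, he⟩ => (mem_arcSet_of_mem_traceScat (a' := a') (b' := b') hρ he).1

theorem ScatPath.First_trace_eq_some_iff {v : V} :
    (P.trace hJ hb).First = some v ↔ P.First = some v ∧ v ∈ interval σ a' b' := by
  simp only [ScatPath.First_eq_some_iff]
  constructor
  · rintro ⟨e, he, rfl, hv⟩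
    obtain ⟨ρ, hρ, he⟩ := Option.bind_eq_some_iff.1 he
    exact ⟨⟨e, startArc_eq_of_mem_traceScat hJ (List.mem_of_mem_head? hρ) he hv, rfl, hJ hv⟩, hv⟩
  · rintro ⟨⟨e, he, rfl, -⟩, hv⟩
    exact ⟨e, startArc_traceScat he hv, rfl, hv⟩

theorem ScatPath.Last_trace_eq_some_iff {v : V} :
    (P.trace hJ hb).Last = some v ↔ P.Last = some v ∧ v ∈ interval σ a' b' := by
  simp only [ScatPath.Last_eq_some_iff]
  constructor
  · rintro ⟨e, he, rfl, hv⟩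
    obtain ⟨ρ, hρ, he⟩ := Option.bind_eq_some_iff.1 he
    exact ⟨⟨e, endArc_eq_of_mem_traceScat hJ (List.mem_of_getLast? hρ) he hv, rfl, hJ hv⟩, hv⟩
  · rintro ⟨⟨e, he, rfl, -⟩, hv⟩
    exact ⟨e, endArc_traceScat he hv, rfl, hv⟩

def PartialImm.trace {VH : Type} {H : Digr VH} (φ : PartialImm H T σ a b)
    (hJ : interval σ a' b' ⊆ interval σ a b) (hb : b ≤ Fintype.card V) :
    PartialImm H T σ a' b' where
  sp e he := (φ.sp e he).trace hJ hb
  arc_disj e he e' he' hne x hx hx' :=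
    φ.arc_disj e he e' he' hne x (ScatPath.arcSet_trace_subset hx)
      (ScatPath.arcSet_trace_subset hx')
  first_eq e he e' he' h := Option.ext fun v => by
    rw [ScatPath.First_trace_eq_some_iff, ScatPath.First_trace_eq_some_iff,
      φ.first_eq e he e' he' h]
  first_inj e he e' he' v h h' := φ.first_inj e he e' he' v
    (ScatPath.First_trace_eq_some_iff.1 h).1 (ScatPath.First_trace_eq_some_iff.1 h').1
  last_eq e he e' he' h := Option.ext fun v => by
    rw [ScatPath.Last_trace_eq_some_iff, ScatPath.Last_trace_eq_some_iff,
      φ.last_eq e he e' he' h]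
  last_inj e he e' he' v h h' := φ.last_inj e he e' he' v
    (ScatPath.Last_trace_eq_some_iff.1 h).1 (ScatPath.Last_trace_eq_some_iff.1 h').1

end Trace

section Scat
variable [Fintype V]

theorem trace_is_partial_immersion_general
    {VH : Type} (H : Digr VH) (T : Digr V)
    (σ : V → ℕ)
    (a b a' b' : ℕ) (h₁ : a ≤ a') (h₃ : b' ≤ b) (hb : b ≤ Fintype.card V)
    (φ : PartialImm H T σ a b) :
    (∀ (e : VH × VH) (he : H.Adj e.1 e.2),
      ∃ Q : ScatPath T σ a' b', Q.pieces = traceScat (φ.sp e he) a' b') ∧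
    ∃ ψ : PartialImm H T σ a' b', ψ.IsTraceOf φ :=
  ⟨fun e he => ⟨(φ.sp e he).trace (interval_mono h₁ h₃) hb, rfl⟩,
    φ.trace (interval_mono h₁ h₃) hb, fun _ _ => rfl⟩

/-- the trace of a partial immersion on a subinterval `σ(a',b'] ⊆ σ(a,b]`
is again a partial immersion, and each of its scattered paths is the trace of the
corresponding scattered path. -/
theorem trace_is_partial_immersion
    {VH : Type} [Fintype VH] (H : Digr VH) (T : Digr V) (hT : T.IsTournament)
    (σ : V → ℕ) (hσ : IsOrdering σ)
    (a b a' b' : ℕ) (h₁ : a ≤ a') (h₂ : a' ≤ b') (h₃ : b' ≤ b) (hb : b ≤ Fintype.card V)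
    (φ : PartialImm H T σ a b) :
    (∀ (e : VH × VH) (he : H.Adj e.1 e.2),
      ∃ Q : ScatPath T σ a' b', Q.pieces = traceScat (φ.sp e he) a' b') ∧
    ∃ ψ : PartialImm H T σ a' b', ψ.IsTraceOf φ :=
  trace_is_partial_immersion_general H T σ a b a' b' h₁ h₃ hb φ

end Scat
end TournamentPaper
end
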